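/- arXiv:1605.08988 — 9 statements merged into one kernel-verified Lean document; each statement's English description precedes it below -/
import Mathlib

section
/- For all y ≥ e, the Lambert W function satisfies W(y) ≤ log((1 + e⁻¹)·y / log(y)). -/
open Real

/-- For all `y ≥ e`, the Lambert W function (the unique `W > 0` with `W·exp(W) = y`)
satisfies `W(y) ≤ log((1 + e⁻¹)·y / log(y))`. -/
theorem lambertW_upper_bound (y w : ℝ) (hy : Real.exp 1 ≤ y)
    (hw : 0 < w) (hwy : w * Real.exp w = y) :
    w ≤ Real.log ((1 + (Real.exp 1)⁻¹) * y / Real.log y) := by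
  have he : (0:ℝ) < Real.exp 1 := Real.exp_pos 1
  have hy0 : 0 < y := lt_of_lt_of_le he hy
  have hlogy1 : 1 ≤ Real.log y := by
    have := Real.log_le_log he hy
    rwa [Real.log_exp] at this
  have hlogy0 : 0 < Real.log y := lt_of_lt_of_le one_pos hlogy1
  -- log y = log w + w
  have hlog : Real.log y = Real.log w + w := by
    rw [← hwy, Real.log_mul (ne_of_gt hw) (ne_of_gt (Real.exp_pos w)), Real.log_exp]
  -- log w ≤ w * e⁻¹
  have hlw : Real.log w ≤ w * (Real.exp 1)⁻¹ := by
    have h1 : Real.log (w / Real.exp 1) ≤ w / Real.exp 1 - 1 :=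
      Real.log_le_sub_one_of_pos (div_pos hw he)
    rw [Real.log_div (ne_of_gt hw) (ne_of_gt he), Real.log_exp] at h1
    have := sub_le_sub_right h1 0
    rw [div_eq_mul_inv] at h1
    linarith
  have hkey : Real.log y ≤ (1 + (Real.exp 1)⁻¹) * w := by
    rw [hlog]; ring_nf; linarith
  have hc : (0:ℝ) < 1 + (Real.exp 1)⁻¹ := by positivity
  have h2 : Real.log (Real.log y) ≤ Real.log ((1 + (Real.exp 1)⁻¹) * w) :=
    Real.log_le_log hlogy0 hkey
  rw [Real.log_div (by positivity) (ne_of_gt hlogy0), Real.log_mul (ne_of_gt hc) (ne_of_gt hy0)]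
  rw [Real.log_mul (ne_of_gt hc) (ne_of_gt hw)] at h2
  have hw' : Real.log w = Real.log y - w := by linarith
  linarith [h2, hw'.symm.le]
end

section
/- Let (Z_i) be i.i.d. N(Δ,2) with Δ > 0, S_n = Z_1 + ... + Z_n, and for T with TΔ² ≥ 1 let τ₂ = T ∧ inf{n ≥ 1 : S_n ≤ -log(TΔ²)/Δ}. Then P(τ₂ < T) ≤ 1/(TΔ²). -/
open MeasureTheory ProbabilityTheory Real Finset

/-! Under `N(Δ, 2)` the moment generating function at `-Δ` equals `exp(-Δ² + Δ²) = 1`, so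
`exp(-Δ S_n)` is a nonnegative martingale of mean one. The event in question forces this
martingale to reach `TΔ²` before time `T`, and Ville's maximal inequality bounds the probability
of that by `1/(TΔ²)`. -/

section

variable {Ω : Type*} {mΩ : MeasurableSpace Ω} {μ : Measure Ω} {Z : ℕ → Ω → ℝ} {t : ℝ}

/-- `exp (t S_{n+1})`; the shift makes it adapted to the natural filtration of `Z` at time `n`. -/
noncomputable def expPartialSum (t : ℝ) (Z : ℕ → Ω → ℝ) (n : ℕ) (ω : Ω) : ℝ :=
  exp (t * ∑ i ∈ range (n + 1), Z i ω)

lemma expPartialSum_pos (n : ℕ) (ω : Ω) : 0 < expPartialSum t Z n ω := exp_pos _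

lemma expPartialSum_succ (n : ℕ) :
    expPartialSum t Z (n + 1) = expPartialSum t Z n * fun ω => exp (t * Z (n + 1) ω) := by
  ext ω
  simp only [expPartialSum, Pi.mul_apply, sum_range_succ _ (n + 1), mul_add, exp_add]

lemma expPartialSum_eq (n : ℕ) :
    expPartialSum t Z n = fun ω => exp (t * (∑ i ∈ range (n + 1), Z i) ω) := by
  ext ω
  simp only [expPartialSum, Finset.sum_apply]

lemma integral_expPartialSum (hind : iIndepFun Z μ) (hmeas : ∀ i, Measurable (Z i)) (n : ℕ) :
    ∫ ω, expPartialSum t Z n ω ∂μ = ∏ i ∈ range (n + 1), mgf (Z i) μ t := by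
  rw [expPartialSum_eq, ← hind.mgf_sum hmeas]
  rfl

lemma martingale_expPartialSum (hind : iIndepFun Z μ) (hmeas : ∀ i, Measurable (Z i))
    (hmgf : ∀ i, mgf (Z i) μ t = 1) :
    Martingale (expPartialSum t Z) (Filtration.natural Z fun i => (hmeas i).stronglyMeasurable)
      μ := by
  have := hind.isProbabilityMeasure
  set ℱ := Filtration.natural Z fun i => (hmeas i).stronglyMeasurable
  have hint_step : ∀ i, Integrable (fun ω => exp (t * Z i ω)) μ := fun i =>
    mgf_pos_iff.mp (by rw [hmgf i]; exact one_pos)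
  have hint : ∀ n, Integrable (expPartialSum t Z n) μ := fun n => by
    rw [expPartialSum_eq]
    exact hind.integrable_exp_mul_sum hmeas fun i _ => hint_step i
  have hadapted : StronglyAdapted ℱ (expPartialSum t Z) := fun n => by
    have hZ : ∀ i ∈ range (n + 1), Measurable[ℱ n] (Z i) := fun i hi =>
      ((Filtration.stronglyAdapted_natural _ i).mono
        (ℱ.mono (Nat.lt_succ_iff.mp (mem_range.mp hi)))).measurable
    exact (measurable_const.mul (Finset.measurable_fun_sum _ hZ)).exp.stronglyMeasurable
  have hstep : ∀ n, μ[fun ω => exp (t * Z (n + 1) ω) | ℱ n] =ᵐ[μ] fun _ => (1 : ℝ) := fun n => by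
    have hsm : StronglyMeasurable[MeasurableSpace.comap (Z (n + 1)) inferInstance]
        (fun ω => exp (t * Z (n + 1) ω)) :=
      ((measurable_const.mul (comap_measurable _)).exp).stronglyMeasurable
    refine (condExp_indep_eq (hmeas (n + 1)).comap_le (ℱ.le n) hsm
      (hind.indep_comap_natural_of_lt _ n.lt_succ_self)).trans ?_
    rw [← mgf, hmgf]
  refine martingale_nat hadapted hint fun n => ?_
  have hint_succ := hint (n + 1)
  rw [expPartialSum_succ] at hint_succ ⊢
  filter_upwards [condExp_mul_of_stronglyMeasurable_left (hadapted n) hint_succ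
    (hint_step (n + 1)), hstep n] with ω hmul hone
  rw [hmul, Pi.mul_apply, hone, mul_one]

lemma MeasureTheory.Submartingale.measure_exists_ge_le [IsFiniteMeasure μ]
    {ℱ : Filtration ℕ mΩ} {f : ℕ → Ω → ℝ} (hsub : Submartingale f ℱ μ)
    (hnonneg : 0 ≤ f) {ε : ℝ} (hε : 0 < ε) (n : ℕ) :
    μ {ω | ∃ k ≤ n, ε ≤ f k ω} ≤ ENNReal.ofReal ((∫ ω, f n ω ∂μ) / ε) := by
  have hset : {ω | ∃ k ≤ n, ε ≤ f k ω} =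
      {ω | (ε.toNNReal : ℝ) ≤ (range (n + 1)).sup' nonempty_range_add_one fun k => f k ω} := by
    ext ω
    simp [Real.coe_toNNReal _ hε.le, le_sup'_iff]
  have hmax := maximal_ineq hsub hnonneg (ε := ε.toNNReal) n
  rw [← hset] at hmax
  have hle : (ε.toNNReal : ENNReal) * μ {ω | ∃ k ≤ n, ε ≤ f k ω} ≤
      ENNReal.ofReal (∫ ω, f n ω ∂μ) :=
    hmax.trans (ENNReal.ofReal_le_ofReal
      (setIntegral_le_integral (hsub.integrable n) (ae_of_all _ (hnonneg n))))
  rw [ENNReal.ofReal_div_of_pos hε, ENNReal.le_div_iff_mul_le (by simp [hε]) (by simp), mul_comm]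
  simpa [ENNReal.ofReal] using hle

lemma mgf_neg_eq_one_of_map_eq_gaussianReal_two {X : Ω → ℝ} {m : ℝ}
    (hX : μ.map X = gaussianReal m 2) : mgf X μ (-m) = 1 := by
  rw [mgf_gaussianReal hX, ← exp_zero]
  push_cast
  ring_nf

end

/-- Let `(Z_i)` be i.i.d. `N(Δ,2)` with `Δ > 0`, `S_n = Z_1 + ⋯ + Z_n`, and for `T` with
`TΔ² ≥ 1` let `τ₂ = T ∧ inf{n ≥ 1 : S_n ≤ -log(TΔ²)/Δ}`. Then
`P(τ₂ < T) ≤ 1/(TΔ²)`; the event `{τ₂ < T}` is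
`{∃ n, 1 ≤ n < T and S_n ≤ -log(TΔ²)/Δ}`. -/
theorem sprt_error_bound {Ω : Type*} [MeasurableSpace Ω] (P : Measure Ω)
    [IsProbabilityMeasure P] (Δ : ℝ) (hΔ : 0 < Δ) (Z : ℕ → Ω → ℝ)
    (hmeas : ∀ i, Measurable (Z i))
    (hindep : iIndepFun Z P)
    (hdist : ∀ i, Measure.map (Z i) P = gaussianReal Δ 2)
    (T : ℕ) (hT : 1 ≤ (T : ℝ) * Δ ^ 2) :
    P {ω | ∃ n : ℕ, 1 ≤ n ∧ n < T ∧
        (∑ i ∈ Finset.range n, Z i ω) ≤ -Real.log ((T : ℝ) * Δ ^ 2) / Δ} ≤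
      ENNReal.ofReal (1 / ((T : ℝ) * Δ ^ 2)) := by
  have hpos : 0 < (T : ℝ) * Δ ^ 2 := one_pos.trans_le hT
  have hmgf : ∀ i, mgf (Z i) P (-Δ) = 1 := fun i =>
    mgf_neg_eq_one_of_map_eq_gaussianReal_two (hdist i)
  have hsub : {ω | ∃ n : ℕ, 1 ≤ n ∧ n < T ∧
      (∑ i ∈ Finset.range n, Z i ω) ≤ -Real.log ((T : ℝ) * Δ ^ 2) / Δ} ⊆
      {ω | ∃ k ≤ T - 2, (T : ℝ) * Δ ^ 2 ≤ expPartialSum (-Δ) Z k ω} := by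
    rintro ω ⟨n, hn1, hnT, hS⟩
    refine ⟨n - 1, by omega, ?_⟩
    rw [expPartialSum, Nat.sub_add_cancel hn1, ← exp_log hpos, exp_le_exp]
    have hΔS := (le_div_iff₀ hΔ).mp hS
    linarith
  have hmean : ∫ ω, expPartialSum (-Δ) Z (T - 2) ω ∂P = 1 := by
    rw [integral_expPartialSum hindep hmeas, prod_eq_one fun i _ => hmgf i]
  refine (measure_mono hsub).trans ?_
  simpa only [hmean] using
    (martingale_expPartialSum hindep hmeas hmgf).submartingale.measure_exists_ge_le
      (fun n ω => (expPartialSum_pos n ω).le) hpos (T - 2)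
end

section
/- Let W_1, W_2, ... be i.i.d. standard Gaussian random variables, μ̂_s = (W_1 + ... + W_s)/s, and ε > 0. Define τ = min{t ≥ 1 : sup_{s ≥ t} |μ̂_s| < ε}. Then E[τ] ≤ 1 + 9/ε². -/
/-!
Write `S_s = W₁ + ⋯ + W_s`. If `τ ω > t ≥ 1` then some `s ≥ t` has `|S_s| ≥ ε s`, so
`E[τ] ≤ 1 + ∑_{t ≥ 1} P(∃ s ≥ t, |S_s| ≥ ε s)`. For `θ = ±ε` the process
`exp (θ S_n - n θ² / 2)` is a product of independent mean-one factors, hence a nonnegative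
martingale, and on that event it reaches `exp (ε² t / 2)` for some `n`; Ville's maximal inequality
bounds each term by `2 exp (-ε² t / 2)`, and the geometric series sums to at most `4 / ε²`.
-/

open MeasureTheory ProbabilityTheory Real
open scoped ENNReal

lemma natCast_le_one_add_tsum_indicator {α : Type*} {E : ℕ → Set α} {x : α} {n : ℕ}
    (h : ∀ k, k + 1 < n → x ∈ E k) :
    (n : ℝ≥0∞) ≤ 1 + ∑' k, (E k).indicator 1 x := by
  calc (n : ℝ≥0∞) ≤ 1 + ((n - 1 : ℕ) : ℝ≥0∞) := by norm_cast; omega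
    _ = 1 + ∑ k ∈ Finset.range (n - 1), (E k).indicator 1 x := by
        rw [Finset.sum_congr rfl fun k hk =>
          Set.indicator_of_mem (h k (by have := Finset.mem_range.1 hk; omega)) 1]
        simp
    _ ≤ 1 + ∑' k, (E k).indicator 1 x := by gcongr; exact ENNReal.sum_le_tsum _

lemma lintegral_natCast_le_one_add_tsum_measure {Ω : Type*} [MeasurableSpace Ω]
    {P : Measure Ω} [IsProbabilityMeasure P] {τ : Ω → ℕ} {E : ℕ → Set Ω}
    (hE : ∀ k, MeasurableSet (E k)) (h : ∀ ω k, k + 1 < τ ω → ω ∈ E k) :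
    ∫⁻ ω, (τ ω : ℝ≥0∞) ∂P ≤ 1 + ∑' k, P (E k) := by
  calc ∫⁻ ω, (τ ω : ℝ≥0∞) ∂P ≤ ∫⁻ ω, (1 + ∑' k, (E k).indicator 1 ω) ∂P :=
        lintegral_mono fun ω => natCast_le_one_add_tsum_indicator (h ω)
    _ = 1 + ∑' k, P (E k) := by
        rw [lintegral_add_left measurable_const, lintegral_const, measure_univ, one_mul,
          lintegral_tsum fun k => (measurable_one.indicator (hE k)).aemeasurable]
        simp_rw [lintegral_indicator_one (hE _)]

lemma tsum_ofReal_exp_neg_mul_succ_le {a : ℝ} (ha : 0 < a) :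
    ∑' k : ℕ, ENNReal.ofReal (exp (-(a * (k + 1)))) ≤ ENNReal.ofReal a⁻¹ := by
  set r := exp (-a)
  have hr : r < 1 := exp_lt_one_iff.2 (neg_lt_zero.2 ha)
  have hterm : ∀ k : ℕ, exp (-(a * (k + 1))) = r * r ^ k := fun k => by
    rw [← pow_succ', ← exp_nat_mul]; push_cast; ring_nf
  have hsum := (hasSum_geometric_of_lt_one (exp_pos _).le hr).mul_left r
  simp_rw [hterm]
  rw [← ENNReal.ofReal_tsum_of_nonneg (fun k => by positivity) hsum.summable, hsum.tsum_eq]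
  refine ENNReal.ofReal_le_ofReal ?_
  -- `r (1 - r)⁻¹ = (exp a - 1)⁻¹` and `a ≤ exp a - 1`
  have hkey : (a + 1) * r ≤ 1 := by
    calc (a + 1) * r ≤ exp a * r := by gcongr; exact add_one_le_exp a
      _ = 1 := by rw [← exp_add, add_neg_cancel, exp_zero]
  rw [← div_eq_mul_inv, div_le_iff₀ (by linarith), inv_mul_eq_div, le_div_iff₀ ha]
  linarith

namespace ProbabilityTheory

variable {Ω β : Type*} [MeasurableSpace β]

abbrev sigmaIio (f : ℕ → Ω → β) (n : ℕ) : MeasurableSpace Ω :=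
  ⨆ i ∈ Set.Iio n, MeasurableSpace.comap (f i) inferInstance

lemma measurable_sigmaIio {f : ℕ → Ω → β} {i n : ℕ} (h : i < n) :
    Measurable[sigmaIio f n] (f i) :=
  measurable_iff_comap_le.2 (le_biSup (fun i => MeasurableSpace.comap (f i) inferInstance) h)

lemma sigmaIio_le [MeasurableSpace Ω] {f : ℕ → Ω → β} (hf : ∀ i, Measurable (f i)) (n : ℕ) :
    sigmaIio f n ≤ ‹MeasurableSpace Ω› :=
  iSup₂_le fun i _ => (hf i).comap_le

lemma measurable_prod_range_sigmaIio {f : ℕ → Ω → ℝ≥0∞} {j n : ℕ} (h : j ≤ n) :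
    Measurable[sigmaIio f n] fun ω => ∏ i ∈ Finset.range j, f i ω :=
  Finset.measurable_prod _ fun _ hi =>
    measurable_sigmaIio ((Finset.mem_range.1 hi).trans_le h)

variable [MeasurableSpace Ω] {P : Measure Ω} {f : ℕ → Ω → ℝ≥0∞}

lemma lintegral_prod_eq_one (hf : ∀ i, Measurable (f i)) (hindep : iIndepFun f P)
    (hmean : ∀ i, ∫⁻ ω, f i ω ∂P = 1) (s : Finset ℕ) :
    ∫⁻ ω, ∏ i ∈ s, f i ω ∂P = 1 := by
  simp [lintegral_prod_eq_prod_lintegral_of_indepFun s f hindep hf, hmean]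

lemma setLIntegral_prod_range_of_le (hf : ∀ i, Measurable (f i)) (hindep : iIndepFun f P)
    (hmean : ∀ i, ∫⁻ ω, f i ω ∂P = 1) {s n : ℕ} (hsn : s ≤ n) {A : Set Ω}
    (hA : MeasurableSet[sigmaIio f s] A) :
    ∫⁻ ω in A, ∏ i ∈ Finset.range n, f i ω ∂P = ∫⁻ ω in A, ∏ i ∈ Finset.range s, f i ω ∂P := by
  have hind : Indep (sigmaIio f s)
      (⨆ i ∈ Set.Ici s, MeasurableSpace.comap (f i) inferInstance) P :=
    indep_iSup_of_disjoint (fun i => (hf i).comap_le) hindep (Set.Iio_disjoint_Ici le_rfl)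
  have hpast : Measurable[sigmaIio f s] (A.indicator fun ω => ∏ i ∈ Finset.range s, f i ω) :=
    (measurable_prod_range_sigmaIio le_rfl).indicator hA
  have hfuture : Measurable[⨆ i ∈ Set.Ici s, MeasurableSpace.comap (f i) inferInstance]
      fun ω => ∏ i ∈ Finset.Ico s n, f i ω :=
    Finset.measurable_prod _ fun i hi => measurable_iff_comap_le.2
      (le_biSup (fun i => MeasurableSpace.comap (f i) inferInstance) (Finset.mem_Ico.1 hi).1)
  calc ∫⁻ ω in A, ∏ i ∈ Finset.range n, f i ω ∂P
      = ∫⁻ ω, A.indicator (fun ω => ∏ i ∈ Finset.range s, f i ω) ω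
          * ∏ i ∈ Finset.Ico s n, f i ω ∂P := by
        rw [← lintegral_indicator (sigmaIio_le hf s _ hA)]
        congr 1 with ω
        by_cases hω : ω ∈ A <;>
          simp [hω, ← Finset.prod_range_mul_prod_Ico (fun i => f i ω) hsn]
    _ = ∫⁻ ω in A, ∏ i ∈ Finset.range s, f i ω ∂P := by
        rw [lintegral_mul_eq_lintegral_mul_lintegral_of_independent_measurableSpace
          (sigmaIio_le hf s) (iSup₂_le fun i _ => (hf i).comap_le) hind hpast hfuture,
          lintegral_prod_eq_one hf hindep hmean, mul_one,
          lintegral_indicator (sigmaIio_le hf s _ hA)]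

/-- Ville's maximal inequality for the product martingale `∏ i < n, f i`. -/
theorem mul_measure_exists_le_prod_range_le_one (hf : ∀ i, Measurable (f i))
    (hindep : iIndepFun f P) (hmean : ∀ i, ∫⁻ ω, f i ω ∂P = 1) (c : ℝ≥0∞) :
    c * P {ω | ∃ n, c ≤ ∏ i ∈ Finset.range n, f i ω} ≤ 1 := by
  set M : ℕ → Ω → ℝ≥0∞ := fun n ω => ∏ i ∈ Finset.range n, f i ω
  set D := disjointed fun n => {ω | c ≤ M n ω}
  have hD : ∀ n, MeasurableSet[sigmaIio f n] (D n) := fun n => by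
    simp only [D, disjointed_eq_inter_compl]
    exact (measurableSet_le measurable_const (measurable_prod_range_sigmaIio le_rfl)).inter
      (.biInter (Set.to_countable _) fun j hj => (measurableSet_le measurable_const
        (measurable_prod_range_sigmaIio (le_of_lt hj))).compl)
  have hD' : ∀ n, MeasurableSet (D n) := fun n => sigmaIio_le hf n _ (hD n)
  have hfirst : ∀ N n, n ≤ N → c * P (D n) ≤ ∫⁻ ω in D n, M N ω ∂P := fun N n hn => by
    rw [setLIntegral_prod_range_of_le hf hindep hmean hn (hD n), ← setLIntegral_const]
    exact setLIntegral_mono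
      ((measurable_prod_range_sigmaIio le_rfl).mono (sigmaIio_le hf n) le_rfl)
      fun ω hω => disjointed_subset _ n hω
  have hunion : {ω | ∃ n, c ≤ M n ω} = ⋃ n, D n := by
    rw [iUnion_disjointed]; ext; simp
  rw [hunion, measure_iUnion (disjoint_disjointed _) hD', ← ENNReal.tsum_mul_left]
  refine ENNReal.tsum_le_of_sum_range_le fun N => ?_
  calc ∑ n ∈ Finset.range N, c * P (D n)
      ≤ ∑ n ∈ Finset.range N, ∫⁻ ω in D n, M N ω ∂P :=
        Finset.sum_le_sum fun n hn => hfirst N n (Finset.mem_range.1 hn).le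
    _ = ∫⁻ ω in ⋃ n ∈ Finset.range N, D n, M N ω ∂P :=
        (lintegral_biUnion_finset ((disjoint_disjointed _).set_pairwise _)
          (fun n _ => hD' n) _).symm
    _ ≤ ∫⁻ ω, M N ω ∂P := setLIntegral_le_lintegral _ _
    _ = 1 := lintegral_prod_eq_one hf hindep hmean _

lemma lintegral_ofReal_exp_mul_sub_cgf [IsProbabilityMeasure P] {X : Ω → ℝ} {θ : ℝ}
    (hX : Integrable (fun ω => exp (θ * X ω)) P) :
    ∫⁻ ω, ENNReal.ofReal (exp (θ * X ω - cgf X P θ)) ∂P = 1 := by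
  simp_rw [exp_sub, exp_cgf hX]
  rw [← ofReal_integral_eq_lintegral_ofReal (hX.div_const _)
    (.of_forall fun _ => div_nonneg (exp_nonneg _) mgf_nonneg), integral_div, ← mgf,
    div_self (mgf_pos hX).ne', ENNReal.ofReal_one]

theorem measure_exists_le_sum_mul_sub_cgf_le {X : ℕ → Ω → ℝ} (hX : ∀ i, Measurable (X i))
    (hindep : iIndepFun X P) {θ : ℝ} (hint : ∀ i, Integrable (fun ω => exp (θ * X i ω)) P)
    (a : ℝ) :
    P {ω | ∃ n, a ≤ ∑ i ∈ Finset.range n, (θ * X i ω - cgf (X i) P θ)}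
      ≤ ENNReal.ofReal (exp (-a)) := by
  have := hindep.isProbabilityMeasure
  set f : ℕ → Ω → ℝ≥0∞ := fun i ω => ENNReal.ofReal (exp (θ * X i ω - cgf (X i) P θ))
  have hf : ∀ i, Measurable (f i) := fun i =>
    ((measurable_const.mul (hX i)).sub_const _).exp.ennreal_ofReal
  have hprod : ∀ n ω, ∏ i ∈ Finset.range n, f i ω
      = ENNReal.ofReal (exp (∑ i ∈ Finset.range n, (θ * X i ω - cgf (X i) P θ))) := by
    intro n ω
    rw [exp_sum, ENNReal.ofReal_prod_of_nonneg fun i _ => (exp_pos _).le]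
  have hville := mul_measure_exists_le_prod_range_le_one hf
    (hindep.comp (fun i x => ENNReal.ofReal (exp (θ * x - cgf (X i) P θ)))
      fun i => ((measurable_const.mul measurable_id).sub_const _).exp.ennreal_ofReal)
    (fun i => lintegral_ofReal_exp_mul_sub_cgf (hint i)) (ENNReal.ofReal (exp a))
  simp only [hprod, ENNReal.ofReal_le_ofReal_iff (exp_pos _).le, exp_le_exp] at hville
  rw [exp_neg, ENNReal.ofReal_inv_of_pos (exp_pos a), ENNReal.le_inv_iff_mul_le, mul_comm]
  exact hville

variable {W : ℕ → Ω → ℝ}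

lemma measure_exists_sq_mul_le_mul_sum_le (hW : ∀ i, Measurable (W i)) (hindep : iIndepFun W P)
    (hdist : ∀ i, P.map (W i) = gaussianReal 0 1) (θ : ℝ) (t : ℕ) :
    P {ω | ∃ s, t ≤ s ∧ θ ^ 2 * s ≤ θ * ∑ i ∈ Finset.range s, W i ω}
      ≤ ENNReal.ofReal (exp (-(θ ^ 2 * t / 2))) := by
  have := hindep.isProbabilityMeasure
  have hcgf : ∀ i, cgf (W i) P θ = θ ^ 2 / 2 := fun i => by
    rw [cgf_gaussianReal (hdist i)]; simp
  have hint : ∀ i, Integrable (fun ω => exp (θ * W i ω)) P := fun i =>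
    mgf_pos_iff.1 (by rw [mgf_gaussianReal (hdist i)]; exact exp_pos _)
  refine (measure_mono ?_).trans (measure_exists_le_sum_mul_sub_cgf_le hW hindep hint _)
  rintro ω ⟨s, hts, hs⟩
  refine ⟨s, ?_⟩
  have hts' : (t : ℝ) ≤ s := Nat.cast_le.2 hts
  simp only [hcgf, Finset.sum_sub_distrib, ← Finset.mul_sum, Finset.sum_const,
    Finset.card_range, nsmul_eq_mul]
  nlinarith [sq_nonneg θ]

lemma measure_exists_mul_le_abs_sum_le (hW : ∀ i, Measurable (W i)) (hindep : iIndepFun W P)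
    (hdist : ∀ i, P.map (W i) = gaussianReal 0 1) {ε : ℝ} (hε : 0 < ε) (t : ℕ) :
    P {ω | ∃ s, t ≤ s ∧ ε * s ≤ |∑ i ∈ Finset.range s, W i ω|}
      ≤ 2 * ENNReal.ofReal (exp (-(ε ^ 2 * t / 2))) := by
  have hsplit : {ω | ∃ s, t ≤ s ∧ ε * s ≤ |∑ i ∈ Finset.range s, W i ω|}
      ⊆ {ω | ∃ s, t ≤ s ∧ ε ^ 2 * s ≤ ε * ∑ i ∈ Finset.range s, W i ω}
        ∪ {ω | ∃ s, t ≤ s ∧ (-ε) ^ 2 * s ≤ -ε * ∑ i ∈ Finset.range s, W i ω} := by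
    rintro ω ⟨s, hts, hs⟩
    rcases le_abs'.1 hs with hneg | hpos
    · exact .inr ⟨s, hts, by nlinarith⟩
    · exact .inl ⟨s, hts, by nlinarith⟩
  calc _ ≤ _ := measure_mono hsplit
    _ ≤ _ := measure_union_le _ _
    _ ≤ _ := add_le_add (measure_exists_sq_mul_le_mul_sum_le hW hindep hdist ε t)
        (measure_exists_sq_mul_le_mul_sum_le hW hindep hdist (-ε) t)
    _ = _ := by rw [neg_sq, two_mul]

end ProbabilityTheory

lemma exists_mul_le_abs_of_lt_sInf {S : ℕ → ℝ} {ε : ℝ} {k : ℕ}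
    (hk : k + 1 < sInf {t : ℕ | 1 ≤ t ∧ ∀ s : ℕ, t ≤ s → |S s / s| < ε}) :
    ∃ s, k + 1 ≤ s ∧ ε * s ≤ |S s| := by
  have := Nat.notMem_of_lt_sInf hk
  simp only [Set.mem_ofPred_eq, le_add_iff_nonneg_left, zero_le, true_and, not_forall,
    not_lt] at this
  obtain ⟨s, hks, hs⟩ := this
  have hs0 : (0 : ℝ) < s := by exact_mod_cast (Nat.succ_pos k).trans_le hks
  rw [abs_div, Nat.abs_cast, le_div_iff₀ hs0] at hs
  exact ⟨s, hks, by linarith⟩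

/-- Let `W_1, W_2, …` be i.i.d. standard Gaussians, `μ̂_s = (W_1 + ⋯ + W_s)/s`, and `ε > 0`.
If `τ = min{t ≥ 1 : ∀ s ≥ t, |μ̂_s| < ε}` then `E[τ] ≤ 1 + 9/ε²`. -/
theorem expectation_settling_time {Ω : Type*} [MeasurableSpace Ω] (P : Measure Ω)
    [IsProbabilityMeasure P] (W : ℕ → Ω → ℝ) (hmeas : ∀ i, Measurable (W i))
    (hindep : iIndepFun W P)
    (hdist : ∀ i, Measure.map (W i) P = gaussianReal 0 1)
    (ε : ℝ) (hε : 0 < ε) :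
    ∫⁻ ω, ((sInf {t : ℕ | 1 ≤ t ∧ ∀ s : ℕ, t ≤ s →
        |(∑ i ∈ Finset.range s, W i ω) / s| < ε} : ℕ) : ℝ≥0∞) ∂P ≤
      ENNReal.ofReal (1 + 9 / ε ^ 2) := by
  set E : ℕ → Set Ω := fun t => {ω | ∃ s, t ≤ s ∧ ε * s ≤ |∑ i ∈ Finset.range s, W i ω|}
  have hE : ∀ t, MeasurableSet (E t) := fun t => by
    simp only [E, Set.ofPred_exists, Set.ofPred_and]
    exact .iUnion fun s => (MeasurableSet.const _).inter
      (measurableSet_le measurable_const (Finset.measurable_sum _ fun i _ => hmeas i).abs)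
  calc _ ≤ 1 + ∑' k, P (E (k + 1)) :=
        lintegral_natCast_le_one_add_tsum_measure (fun k => hE (k + 1))
          fun _ _ hk => exists_mul_le_abs_of_lt_sInf hk
    _ ≤ 1 + ∑' k : ℕ, 2 * ENNReal.ofReal (exp (-(ε ^ 2 / 2 * (k + 1)))) := by
        gcongr with k
        refine (measure_exists_mul_le_abs_sum_le hmeas hindep hdist hε (k + 1)).trans_eq ?_
        push_cast; ring_nf
    _ ≤ 1 + 2 * ENNReal.ofReal (ε ^ 2 / 2)⁻¹ := by
        rw [ENNReal.tsum_mul_left]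
        gcongr
        exact tsum_ofReal_exp_neg_mul_succ_le (by positivity)
    _ ≤ ENNReal.ofReal (1 + 9 / ε ^ 2) := by
        rw [ENNReal.ofReal_add zero_le_one (by positivity), ENNReal.ofReal_one,
          ← ENNReal.ofReal_ofNat 2, ← ENNReal.ofReal_mul zero_le_two]
        gcongr
        rw [inv_div, ← mul_div_assoc]
        gcongr
        norm_num
end

section
/- Let W_1, W_2, ... be i.i.d. standard Gaussians, μ̂_s their running empirical means, ε > 0, and t ≥ 1. Then P(∃ s ≥ t : |μ̂_s| ≥ ε) ≤ Σ_{k=1}^∞ 2·exp(-k·t·ε²/4) = 2/(exp(tε²/4) - 1). -/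
/-!
Write `S_s = W_0 + ⋯ + W_{s-1}`. For `c ≥ 0`, `exp (c S_s)` is a nonnegative submartingale, so
Doob's maximal inequality and the Gaussian moment generating function give the Chernoff-type
bound `P(max_{s ≤ n} |S_s| ≥ a) ≤ 2 exp (-a² / 2n)`. If `s ≥ t` and `|S_s / s| ≥ ε`, then with
`k + 1 = ⌊s / t⌋` we have `s < (k + 2) t` and `|S_s| ≥ (k + 1) t ε`; the maximal bound on the
block `s ≤ (k + 2) t` is at most `2 exp (-(k + 1) t ε² / 4)`, and a union bound over `k` sums
the geometric series.
-/

open MeasureTheory ProbabilityTheory Real Finset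
open scoped NNReal

lemma hasSum_exp_neg_succ_mul {x : ℝ} (hx : 0 < x) :
    HasSum (fun k : ℕ => exp (-((k : ℝ) + 1) * x)) (exp x - 1)⁻¹ := by
  have hr : exp (-x) < 1 := exp_lt_one_iff.mpr (neg_lt_zero.mpr hx)
  have hterm : (fun k : ℕ => exp (-((k : ℝ) + 1) * x)) = fun k => exp (-x) * exp (-x) ^ k := by
    ext k
    rw [← exp_nat_mul, ← exp_add]
    ring_nf
  have hsum : (exp x - 1)⁻¹ = exp (-x) * (1 - exp (-x))⁻¹ := by
    rw [exp_neg]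
    field_simp [(one_lt_exp_iff.mpr hx).ne']
  rw [hterm, hsum]
  exact (hasSum_geometric_of_lt_one (exp_pos _).le hr).mul_left _

section RandomWalk

variable {Ω : Type*} {W : ℕ → Ω → ℝ}

def peelingBlock (W : ℕ → Ω → ℝ) (ε : ℝ) (t k : ℕ) : Set Ω :=
  {ω | ∃ j < (k + 2) * t, ((k : ℝ) + 1) * t * ε ≤ |∑ i ∈ range (j + 1), W i ω|}

lemma subset_iUnion_peelingBlock {ε : ℝ} (hε : 0 ≤ ε) {t : ℕ} (ht : 0 < t) :
    {ω | ∃ s, t ≤ s ∧ ε ≤ |(∑ i ∈ range s, W i ω) / s|} ⊆ ⋃ k, peelingBlock W ε t k := by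
  rintro ω ⟨s, hts, h⟩
  obtain ⟨k, hk⟩ : ∃ k, s / t = k + 1 :=
    Nat.exists_eq_add_one.mpr ((Nat.one_le_div_iff ht).mpr hts)
  obtain ⟨j, rfl⟩ : ∃ j, s = j + 1 := Nat.exists_eq_add_one.mpr (ht.trans_le hts)
  refine Set.mem_iUnion.mpr ⟨k, j, ?_, ?_⟩
  · have := Nat.lt_div_mul_add (a := j + 1) ht
    rw [hk] at this
    linarith
  · have hkt : ((k + 1) * t : ℕ) ≤ ((j + 1 : ℕ) : ℝ) := by
      exact_mod_cast hk ▸ Nat.div_mul_le_self (j + 1) t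
    rw [abs_div, Nat.abs_cast, le_div_iff₀ (by positivity)] at h
    push_cast at h hkt
    nlinarith [mul_le_mul_of_nonneg_right hkt hε]

variable [MeasurableSpace Ω] {P : Measure Ω}

lemma stronglyMeasurable_exp_mul_sum_range (hmeas : ∀ i, Measurable (W i)) (c : ℝ) (s : ℕ) :
    StronglyMeasurable[Filtration.natural W (fun i => (hmeas i).stronglyMeasurable) s]
      (fun ω => exp (c * ∑ i ∈ range (s + 1), W i ω)) := by
  refine continuous_exp.comp_stronglyMeasurable (StronglyMeasurable.const_mul ?_ c)
  refine Finset.stronglyMeasurable_fun_sum _ fun i hi => ?_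
  exact (Filtration.stronglyAdapted_natural _ i).mono
    (Filtration.mono _ (Nat.lt_succ_iff.mp (mem_range.mp hi)))

lemma integrable_exp_mul_sum_range (hmeas : ∀ i, Measurable (W i)) (hindep : iIndepFun W P)
    {c : ℝ} (hint : ∀ i, Integrable (fun ω => exp (c * W i ω)) P) (n : ℕ) :
    Integrable (fun ω => exp (c * ∑ i ∈ range n, W i ω)) P := by
  have := hindep.isProbabilityMeasure
  simpa only [Finset.sum_apply] using
    hindep.integrable_exp_mul_sum hmeas (s := range n) fun i _ => hint i

lemma submartingale_exp_mul_sum_range (hmeas : ∀ i, Measurable (W i)) (hindep : iIndepFun W P)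
    {c : ℝ} (hint : ∀ i, Integrable (fun ω => exp (c * W i ω)) P)
    (hmgf : ∀ i, 1 ≤ mgf (W i) P c) :
    Submartingale (fun s ω => exp (c * ∑ i ∈ range (s + 1), W i ω))
      (Filtration.natural W fun i => (hmeas i).stronglyMeasurable) P := by
  have := hindep.isProbabilityMeasure
  set ℱ := Filtration.natural W fun i => (hmeas i).stronglyMeasurable
  refine submartingale_nat (stronglyMeasurable_exp_mul_sum_range hmeas c)
    (fun s => integrable_exp_mul_sum_range hmeas hindep hint (s + 1)) fun s => ?_
  set f : Ω → ℝ := fun ω => exp (c * ∑ i ∈ range (s + 1), W i ω)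
  set g : Ω → ℝ := fun ω => exp (c * W (s + 1) ω)
  have hsplit : (fun ω => exp (c * ∑ i ∈ range (s + 1 + 1), W i ω)) = f * g := by
    ext ω
    simp only [f, g, Pi.mul_apply, sum_range_succ _ (s + 1), mul_add, exp_add]
  have hpull : P[f * g|ℱ s] =ᵐ[P] f * P[g|ℱ s] :=
    condExp_mul_of_stronglyMeasurable_left (stronglyMeasurable_exp_mul_sum_range hmeas c s)
      (hsplit ▸ integrable_exp_mul_sum_range hmeas hindep hint _) (hint _)
  have hindep_next : P[g|ℱ s] =ᵐ[P] fun _ => mgf (W (s + 1)) P c :=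
    condExp_indep_eq (hmeas (s + 1)).comap_le (ℱ.le s)
      (measurable_exp.comp ((comap_measurable (W (s + 1))).const_mul c)).stronglyMeasurable
      (hindep.indep_comap_natural_of_lt _ (Nat.lt_succ_self s))
  rw [hsplit]
  filter_upwards [hpull, hindep_next] with ω hω hω'
  rw [hω, Pi.mul_apply, hω']
  exact le_mul_of_one_le_right (exp_pos _).le (hmgf _)

lemma measure_exists_le_sum_range_le (hmeas : ∀ i, Measurable (W i)) (hindep : iIndepFun W P)
    {c : ℝ} (hc : 0 ≤ c) (hint : ∀ i, Integrable (fun ω => exp (c * W i ω)) P)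
    (hmgf : ∀ i, 1 ≤ mgf (W i) P c) (a : ℝ) (n : ℕ) :
    P {ω | ∃ k ≤ n, a ≤ ∑ i ∈ range (k + 1), W i ω} ≤
      ENNReal.ofReal (exp (-(c * a)) * ∏ i ∈ range (n + 1), mgf (W i) P c) := by
  have := hindep.isProbabilityMeasure
  set ε : ℝ≥0 := (exp (c * a)).toNNReal
  set S := {ω | ε ≤ (range (n + 1)).sup' nonempty_range_add_one
    fun k => exp (c * ∑ i ∈ range (k + 1), W i ω)}
  have hsub : {ω | ∃ k ≤ n, a ≤ ∑ i ∈ range (k + 1), W i ω} ⊆ S := by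
    rintro ω ⟨k, hk, hka⟩
    refine le_trans ?_ (le_sup' (fun k => exp (c * ∑ i ∈ range (k + 1), W i ω))
      (mem_range_succ_iff.mpr hk))
    rw [Real.coe_toNNReal _ (exp_pos _).le]
    exact exp_le_exp.mpr (mul_le_mul_of_nonneg_left hka hc)
  have hdoob := maximal_ineq (submartingale_exp_mul_sum_range hmeas hindep hint hmgf)
    (fun _ _ => (exp_pos _).le) (ε := ε) n
  have hint_le : ∫ ω in S, exp (c * ∑ i ∈ range (n + 1), W i ω) ∂P ≤
      ∏ i ∈ range (n + 1), mgf (W i) P c := by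
    rw [← hindep.mgf_sum hmeas]
    simpa only [mgf, Finset.sum_apply] using setIntegral_le_integral
      (integrable_exp_mul_sum_range hmeas hindep hint _) (.of_forall fun _ => (exp_pos _).le)
  calc P {ω | ∃ k ≤ n, a ≤ ∑ i ∈ range (k + 1), W i ω} ≤ P S := measure_mono hsub
    _ ≤ ENNReal.ofReal (∏ i ∈ range (n + 1), mgf (W i) P c) / ε := by
      rw [ENNReal.le_div_iff_mul_le (.inl (by simp [ε, exp_pos])) (.inl (by simp)), mul_comm]
      exact hdoob.trans (ENNReal.ofReal_le_ofReal hint_le)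
    _ = _ := by
      rw [← ENNReal.ofReal, ← ENNReal.ofReal_div_of_pos (exp_pos _), div_eq_inv_mul, ← exp_neg]

lemma measure_exists_le_sum_range_le_of_gaussian (hmeas : ∀ i, Measurable (W i))
    (hindep : iIndepFun W P) (hdist : ∀ i, P.map (W i) = gaussianReal 0 1) {a : ℝ} (ha : 0 ≤ a)
    {n : ℕ} (hn : n ≠ 0) :
    P {ω | ∃ k < n, a ≤ ∑ i ∈ range (k + 1), W i ω} ≤
      ENNReal.ofReal (exp (-a ^ 2 / (2 * n))) := by
  have := hindep.isProbabilityMeasure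
  obtain ⟨m, rfl⟩ := Nat.exists_eq_succ_of_ne_zero hn
  have hmgf (c : ℝ) (i : ℕ) : mgf (W i) P c = exp (c ^ 2 / 2) := by
    simpa using mgf_gaussianReal (hdist i) c
  have hint (c : ℝ) (i : ℕ) : Integrable (fun ω => exp (c * W i ω)) P := by
    rw [← mgf_pos_iff, hmgf]
    exact exp_pos _
  -- the Chernoff parameter optimising `exp (-c a + n c² / 2)`
  set c := a / (m + 1)
  convert measure_exists_le_sum_range_le hmeas hindep (c := c) (by positivity) (hint c)
    (fun i => by rw [hmgf]; exact one_le_exp (by positivity)) a m using 3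
  · simp only [Nat.lt_succ_iff]
  · rw [prod_congr rfl fun i _ => hmgf c i, prod_const, card_range, ← exp_nat_mul, ← exp_add]
    congr 1
    simp only [c]
    push_cast
    field_simp
    ring

lemma measure_exists_le_abs_sum_range_le_of_gaussian (hmeas : ∀ i, Measurable (W i))
    (hindep : iIndepFun W P) (hdist : ∀ i, P.map (W i) = gaussianReal 0 1) {a : ℝ} (ha : 0 ≤ a)
    {n : ℕ} (hn : n ≠ 0) :
    P {ω | ∃ k < n, a ≤ |∑ i ∈ range (k + 1), W i ω|} ≤
      ENNReal.ofReal (2 * exp (-a ^ 2 / (2 * n))) := by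
  have hdist_neg (i : ℕ) : P.map (-W i) = gaussianReal 0 1 := by
    rw [show -W i = (fun x => -x) ∘ W i from rfl, ← Measure.map_map measurable_neg (hmeas i),
      hdist i, gaussianReal_map_neg, neg_zero]
  have hsub : {ω | ∃ k < n, a ≤ |∑ i ∈ range (k + 1), W i ω|} ⊆
      {ω | ∃ k < n, a ≤ ∑ i ∈ range (k + 1), W i ω} ∪
        {ω | ∃ k < n, a ≤ ∑ i ∈ range (k + 1), (fun i => -W i) i ω} := by
    rintro ω ⟨k, hk, hka⟩
    rcases le_abs.mp hka with h | h
    · exact .inl ⟨k, hk, h⟩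
    · exact .inr ⟨k, hk, by simpa only [Pi.neg_apply, sum_neg_distrib] using h⟩
  calc P {ω | ∃ k < n, a ≤ |∑ i ∈ range (k + 1), W i ω|}
      ≤ ENNReal.ofReal (exp (-a ^ 2 / (2 * n))) + ENNReal.ofReal (exp (-a ^ 2 / (2 * n))) :=
        (measure_mono hsub).trans <| (measure_union_le _ _).trans <| add_le_add
          (measure_exists_le_sum_range_le_of_gaussian hmeas hindep hdist ha hn)
          (measure_exists_le_sum_range_le_of_gaussian (fun i => (hmeas i).neg)
            (hindep.comp (fun _ x => -x) fun _ => measurable_neg) hdist_neg ha hn)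
    _ = ENNReal.ofReal (2 * exp (-a ^ 2 / (2 * n))) := by
      rw [← ENNReal.ofReal_add (exp_pos _).le (exp_pos _).le, ← two_mul]

lemma measure_peelingBlock_le_of_gaussian (hmeas : ∀ i, Measurable (W i))
    (hindep : iIndepFun W P) (hdist : ∀ i, P.map (W i) = gaussianReal 0 1) {ε : ℝ} (hε : 0 ≤ ε)
    {t : ℕ} (ht : 0 < t) (k : ℕ) :
    P (peelingBlock W ε t k) ≤
      ENNReal.ofReal (2 * exp (-((k : ℝ) + 1) * t * ε ^ 2 / 4)) := by
  refine (measure_exists_le_abs_sum_range_le_of_gaussian hmeas hindep hdist (by positivity)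
    (by positivity)).trans
    (ENNReal.ofReal_le_ofReal (mul_le_mul_of_nonneg_left (exp_le_exp.mpr ?_) zero_le_two))
  -- `a² / (2n) = (k + 1)² t ε² / (2 (k + 2))`, and `2 (k + 1) ≥ k + 2`
  have ht' : (0 : ℝ) < t := Nat.cast_pos.mpr ht
  rw [div_le_div_iff₀ (by positivity) (by norm_num)]
  push_cast
  have hk : (0 : ℝ) ≤ k := Nat.cast_nonneg k
  nlinarith [mul_nonneg (mul_nonneg hk (by positivity : (0 : ℝ) ≤ k + 1)) (sq_nonneg (t * ε))]

end RandomWalk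

theorem peeling_bound_general {Ω : Type*} [MeasurableSpace Ω] (P : Measure Ω)
    (W : ℕ → Ω → ℝ) (hmeas : ∀ i, Measurable (W i))
    (hindep : iIndepFun W P)
    (hdist : ∀ i, Measure.map (W i) P = gaussianReal 0 1)
    (ε : ℝ) (hε : 0 < ε) (t : ℕ) (ht : 1 ≤ t) :
    P {ω | ∃ s : ℕ, t ≤ s ∧ ε ≤ |(∑ i ∈ Finset.range s, W i ω) / s|} ≤
        ENNReal.ofReal (∑' k : ℕ, 2 * Real.exp (-((k : ℝ) + 1) * t * ε ^ 2 / 4)) ∧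
      ∑' k : ℕ, 2 * Real.exp (-((k : ℝ) + 1) * t * ε ^ 2 / 4) =
        2 / (Real.exp (t * ε ^ 2 / 4) - 1) := by
  have hsum : HasSum (fun k : ℕ => 2 * exp (-((k : ℝ) + 1) * t * ε ^ 2 / 4))
      (2 / (exp (t * ε ^ 2 / 4) - 1)) := by
    have hexponent (k : ℕ) :
        -((k : ℝ) + 1) * t * ε ^ 2 / 4 = -((k : ℝ) + 1) * (t * ε ^ 2 / 4) := by
      ring
    simpa only [hexponent, div_eq_mul_inv] using
      (hasSum_exp_neg_succ_mul (by positivity : (0 : ℝ) < t * ε ^ 2 / 4)).mul_left 2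
  refine ⟨?_, hsum.tsum_eq⟩
  calc P {ω | ∃ s : ℕ, t ≤ s ∧ ε ≤ |(∑ i ∈ Finset.range s, W i ω) / s|}
      ≤ P (⋃ k, peelingBlock W ε t k) := measure_mono (subset_iUnion_peelingBlock hε.le ht)
    _ ≤ ∑' k : ℕ, ENNReal.ofReal (2 * exp (-((k : ℝ) + 1) * t * ε ^ 2 / 4)) :=
        (measure_iUnion_le _).trans <| ENNReal.tsum_le_tsum fun k =>
          measure_peelingBlock_le_of_gaussian hmeas hindep hdist hε.le ht k
    _ = ENNReal.ofReal (∑' k : ℕ, 2 * exp (-((k : ℝ) + 1) * t * ε ^ 2 / 4)) :=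
        (ENNReal.ofReal_tsum_of_nonneg (fun _ => by positivity) hsum.summable).symm

/-- Peeling bound: for i.i.d. standard Gaussians with empirical means `μ̂_s`, `ε > 0` and
`t ≥ 1`, `P(∃ s ≥ t : |μ̂_s| ≥ ε) ≤ Σ_{k=1}^∞ 2·exp(-k·t·ε²/4) = 2/(exp(tε²/4) - 1)`. -/
theorem peeling_bound {Ω : Type*} [MeasurableSpace Ω] (P : Measure Ω)
    [IsProbabilityMeasure P] (W : ℕ → Ω → ℝ) (hmeas : ∀ i, Measurable (W i))
    (hindep : iIndepFun W P)
    (hdist : ∀ i, Measure.map (W i) P = gaussianReal 0 1)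
    (ε : ℝ) (hε : 0 < ε) (t : ℕ) (ht : 1 ≤ t) :
    P {ω | ∃ s : ℕ, t ≤ s ∧ ε ≤ |(∑ i ∈ Finset.range s, W i ω) / s|} ≤
        ENNReal.ofReal (∑' k : ℕ, 2 * Real.exp (-((k : ℝ) + 1) * t * ε ^ 2 / 4)) ∧
      ∑' k : ℕ, 2 * Real.exp (-((k : ℝ) + 1) * t * ε ^ 2 / 4) =
        2 / (Real.exp (t * ε ^ 2 / 4) - 1) :=
  peeling_bound_general P W hmeas hindep hdist ε hε t ht
end

section
/- Let Δ > 0, T a positive integer, and ν = 2·W(Δ²T/2)/Δ² where W is the Lambert function. Then for all integers n ≥ ν, (2/n)·log(T/n) ≤ Δ²·ν/n, and consequently Σ_{n=⌈ν⌉}^∞ exp(-(Δ²/2)·(√n - √ν)²) ≤ 1 + 2/Δ² + √(2πν)/Δ. -/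
/-!
From `w eʷ = Δ²T/2` and `ν = 2w/Δ²` we get `T = eʷ ν`, hence `log (T/n) ≤ w = Δ²ν/2` for `n ≥ ν`.
The summand `x ↦ exp (-b (√x - √ν)²)`, `b = Δ²/2`, is at most `1` and antitone on `[ν, ∞)`, so
the sum is at most its first term plus the integral over `(ν, ∞)`. The substitution
`x = (u + √ν)²` turns that integral into `∫₀^∞ 2 (u + √ν) e^{-bu²} du = 1/b + √ν √(π/b)`.
-/

open Real MeasureTheory Set

theorem integral_Ioi_mul_exp_neg_mul_sq {b : ℝ} (hb : 0 < b) :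
    ∫ x in Ioi (0 : ℝ), x * exp (-b * x ^ 2) = (2 * b)⁻¹ := by
  exact_mod_cast integral_mul_cexp_neg_mul_sq (b := (b : ℂ)) (by simpa using hb)

theorem AntitoneOn.tsum_le_add_integral_Ioi {f : ℝ → ℝ} {a m : ℝ} (anti : AntitoneOn f (Ici a))
    (ham : a ≤ m) (integrable : IntegrableOn f (Ioi a)) (nonneg : ∀ t ∈ Ici a, 0 ≤ f t) :
    ∑' k : ℕ, f (m + k) ≤ f m + ∫ x in Ioi a, f x := by
  have hmk (k : ℕ) : a ≤ m + k := ham.trans (le_add_of_nonneg_right k.cast_nonneg)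
  refine tsum_le_of_sum_range_le (fun k => nonneg _ (hmk k)) fun N => ?_
  calc ∑ k ∈ Finset.range N, f (m + k)
      ≤ ∑ k ∈ Finset.range (N + 1), f (m + k) :=
        Finset.sum_le_sum_of_subset_of_nonneg (by simp) fun k _ _ => nonneg _ (hmk k)
    _ = f m + ∑ k ∈ Finset.range N, f (m + (k + 1 : ℕ)) := by
        rw [Finset.sum_range_succ', add_comm]; simp
    _ ≤ f m + ∫ x in m..m + N, f x := by
        gcongr
        exact (anti.mono fun x hx => ham.trans hx.1).sum_le_integral
    _ ≤ f m + ∫ x in Ioi a, f x := by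
        rw [intervalIntegral.integral_of_le (le_add_of_nonneg_right N.cast_nonneg)]
        exact add_le_add le_rfl <| setIntegral_mono_set integrable
          (ae_restrict_of_forall_mem measurableSet_Ioi fun t ht => nonneg t (mem_Ici_of_Ioi ht))
          (Ioc_subset_Ioi_self.trans (Ioi_subset_Ioi ham)).eventuallyLE

section SqrtSubSqrt

variable {a : ℝ}

theorem image_add_sqrt_sq_Ioi (ha : 0 ≤ a) :
    (fun u => (u + √a) ^ 2) '' Ioi 0 = Ioi a := by
  ext x
  constructor
  · rintro ⟨u, hu : 0 < u, rfl⟩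
    show a < _
    nlinarith [sq_sqrt ha, sqrt_nonneg a]
  · intro (hx : a < x)
    refine ⟨√x - √a, sub_pos.2 (sqrt_lt_sqrt ha hx), ?_⟩
    simp [sq_sqrt (ha.trans hx.le)]

theorem injOn_add_sqrt_sq (a : ℝ) : InjOn (fun u => (u + √a) ^ 2) (Ioi 0) :=
  StrictMonoOn.injOn fun u (hu : 0 < u) _ _ huv => by gcongr

theorem hasDerivWithinAt_add_sqrt_sq (a u : ℝ) :
    HasDerivWithinAt (fun u => (u + √a) ^ 2) (2 * (u + √a)) (Ioi 0) u := by
  simpa using (((hasDerivAt_id u).add_const √a).fun_pow 2).hasDerivWithinAt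

theorem abs_two_mul_add_sqrt_smul {g : ℝ → ℝ} {u : ℝ} (hu : u ∈ Ioi 0) :
    |2 * (u + √a)| • g (√((u + √a) ^ 2) - √a) = 2 * (u + √a) * g u := by
  have hu : 0 ≤ u + √a := add_nonneg (le_of_lt hu) (sqrt_nonneg a)
  rw [sqrt_sq hu, add_sub_cancel_right, abs_of_nonneg (by positivity), smul_eq_mul]

theorem integrableOn_Ioi_comp_sqrt_sub_sqrt_iff (ha : 0 ≤ a) (g : ℝ → ℝ) :
    IntegrableOn (fun x => g (√x - √a)) (Ioi a) ↔
      IntegrableOn (fun u => 2 * (u + √a) * g u) (Ioi 0) := by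
  rw [← image_add_sqrt_sq_Ioi ha, integrableOn_image_iff_integrableOn_abs_deriv_smul
    measurableSet_Ioi (fun u _ => hasDerivWithinAt_add_sqrt_sq a u) (injOn_add_sqrt_sq a)]
  exact integrableOn_congr_fun (fun u hu => abs_two_mul_add_sqrt_smul hu) measurableSet_Ioi

theorem integral_Ioi_comp_sqrt_sub_sqrt (ha : 0 ≤ a) (g : ℝ → ℝ) :
    ∫ x in Ioi a, g (√x - √a) = ∫ u in Ioi 0, 2 * (u + √a) * g u := by
  rw [← image_add_sqrt_sq_Ioi ha, integral_image_eq_integral_abs_deriv_smul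
    measurableSet_Ioi (fun u _ => hasDerivWithinAt_add_sqrt_sq a u) (injOn_add_sqrt_sq a)]
  exact setIntegral_congr_fun measurableSet_Ioi fun u hu => abs_two_mul_add_sqrt_smul hu

variable {b : ℝ}

theorem integrableOn_exp_neg_mul_sq_sqrt_sub_sqrt (ha : 0 ≤ a) (hb : 0 < b) :
    IntegrableOn (fun x => exp (-b * (√x - √a) ^ 2)) (Ioi a) := by
  rw [integrableOn_Ioi_comp_sqrt_sub_sqrt_iff ha fun u => exp (-b * u ^ 2)]
  simp_rw [mul_add, add_mul, mul_assoc]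
  exact (((integrable_mul_exp_neg_mul_sq hb).const_mul 2).add
    (((integrable_exp_neg_mul_sq hb).const_mul √a).const_mul 2)).integrableOn

theorem integral_exp_neg_mul_sq_sqrt_sub_sqrt (ha : 0 ≤ a) (hb : 0 < b) :
    ∫ x in Ioi a, exp (-b * (√x - √a) ^ 2) = 1 / b + √a * √(π / b) := by
  rw [integral_Ioi_comp_sqrt_sub_sqrt ha fun u => exp (-b * u ^ 2)]
  simp_rw [mul_add, add_mul, mul_assoc]
  rw [integral_add ((integrable_mul_exp_neg_mul_sq hb).const_mul 2).integrableOn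
      (((integrable_exp_neg_mul_sq hb).const_mul √a).const_mul 2).integrableOn,
    integral_const_mul, integral_const_mul, integral_const_mul, integral_Ioi_mul_exp_neg_mul_sq hb,
    integral_gaussian_Ioi]
  field_simp

theorem antitoneOn_exp_neg_mul_sq_sqrt_sub_sqrt (hb : 0 ≤ b) :
    AntitoneOn (fun x => exp (-b * (√x - √a) ^ 2)) (Ici a) := fun x (hx : a ≤ x) y _ hxy => by
  have hx' : 0 ≤ √x - √a := sub_nonneg.2 (sqrt_le_sqrt hx)
  rw [exp_le_exp, neg_mul, neg_mul, neg_le_neg_iff]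
  exact mul_le_mul_of_nonneg_left (pow_le_pow_left₀ hx' (by gcongr) 2) hb

end SqrtSubSqrt

theorem log_exp_mul_div_le {w ν n : ℝ} (hν : 0 < ν) (hn : ν ≤ n) : log (exp w * ν / n) ≤ w := by
  have hn0 : 0 < n := hν.trans_le hn
  rw [log_le_iff_le_exp (by positivity), div_le_iff₀ hn0]
  gcongr

theorem lambert_threshold_sum_bound_general (Δ : ℝ) (hΔ : 0 < Δ) (T : ℕ)
    (w ν : ℝ) (hw : 0 < w) (hwe : w * Real.exp w = Δ ^ 2 * T / 2)
    (hν : ν = 2 * w / Δ ^ 2) :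
    (∀ n : ℕ, ν ≤ n → (2 / n) * Real.log ((T : ℝ) / n) ≤ Δ ^ 2 * ν / n) ∧
      ∑' k : ℕ, Real.exp (-(Δ ^ 2 / 2) *
          (Real.sqrt ((⌈ν⌉₊ : ℝ) + k) - Real.sqrt ν) ^ 2) ≤
        1 + 2 / Δ ^ 2 + Real.sqrt (2 * π * ν) / Δ := by
  have hν0 : 0 < ν := by rw [hν]; positivity
  have hT : (T : ℝ) = exp w * ν := by rw [hν]; field_simp; linarith
  refine ⟨fun n hn => ?_, ?_⟩
  · calc 2 / n * log (T / n) ≤ 2 / n * w := by rw [hT]; gcongr; exact log_exp_mul_div_le hν0 hn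
      _ = Δ ^ 2 * ν / n := by rw [hν]; field_simp
  set b := Δ ^ 2 / 2
  have hb : 0 < b := by positivity
  calc _ ≤ exp (-b * (√⌈ν⌉₊ - √ν) ^ 2) + ∫ x in Ioi ν, exp (-b * (√x - √ν) ^ 2) :=
        AntitoneOn.tsum_le_add_integral_Ioi (antitoneOn_exp_neg_mul_sq_sqrt_sub_sqrt hb.le)
          (Nat.le_ceil ν) (integrableOn_exp_neg_mul_sq_sqrt_sub_sqrt hν0.le hb)
          fun _ _ => (exp_pos _).le
    _ ≤ 1 + 1 / b + √ν * √(π / b) := by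
        rw [add_assoc, integral_exp_neg_mul_sq_sqrt_sub_sqrt hν0.le hb]
        gcongr
        exact exp_le_one_iff.2 (by nlinarith)
    _ = 1 + 2 / Δ ^ 2 + √(2 * π * ν) / Δ := by
        rw [← sqrt_mul hν0.le, show ν * (π / b) = 2 * π * ν / Δ ^ 2 by ring,
          sqrt_div' _ (sq_nonneg Δ), sqrt_sq hΔ.le, one_div_div]

/-- Let `Δ > 0`, `T ≥ 1` an integer, and `ν = 2·W(Δ²T/2)/Δ²` where `W` is the Lambert
function (here given by `w > 0` with `w·exp(w) = Δ²T/2`). Then for all integers `n ≥ ν`,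
`(2/n)·log(T/n) ≤ Δ²·ν/n`, and
`Σ_{n=⌈ν⌉}^∞ exp(-(Δ²/2)·(√n - √ν)²) ≤ 1 + 2/Δ² + √(2πν)/Δ`. -/
theorem lambert_threshold_sum_bound (Δ : ℝ) (hΔ : 0 < Δ) (T : ℕ) (hT : 1 ≤ T)
    (w ν : ℝ) (hw : 0 < w) (hwe : w * Real.exp w = Δ ^ 2 * T / 2)
    (hν : ν = 2 * w / Δ ^ 2) :
    (∀ n : ℕ, ν ≤ n → (2 / n) * Real.log ((T : ℝ) / n) ≤ Δ ^ 2 * ν / n) ∧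
      ∑' k : ℕ, Real.exp (-(Δ ^ 2 / 2) *
          (Real.sqrt ((⌈ν⌉₊ : ℝ) + k) - Real.sqrt ν) ^ 2) ≤
        1 + 2 / Δ ^ 2 + Real.sqrt (2 * π * ν) / Δ :=
  lambert_threshold_sum_bound_general Δ hΔ T w ν hw hwe hν
end

section
/- Let Δ > 0, T ≥ 1 with TΔ² > 4√(2πe), and g(x) = x + T·Φ(-Δ√(x/2)) where Φ is the standard Gaussian CDF. Then g attains its minimum over (0,∞) at x* = (2/Δ²)·W(T²Δ⁴/(32π)), and Φ(-Δ√(x*/2)) ≤ 4/(TΔ²). -/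
/-!
Substituting `y = Δ √(x/2)` turns `g` into `f y = (2/Δ²) y² + T Φ(-y)`, whose derivative
`(4/Δ²) y - T φ(y)` is increasing on `(0, ∞)` because `φ` decreases there. Squaring shows that
the defining equation of `w` is exactly `T φ(√w) = 4 √w / Δ²`, so the derivative vanishes at
`y = √w`, which is therefore the minimiser. At that point the Mills-ratio bound
`Φ(-y) ≤ φ(y) / y` gives `Φ(-√w) ≤ 4 / (T Δ²)`.
-/

open Real MeasureTheory ProbabilityTheory Filter Topology Set

namespace ProbabilityTheory

lemma continuous_gaussianPDFReal (μ : ℝ) (v : NNReal) : Continuous (gaussianPDFReal μ v) := by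
  rw [gaussianPDFReal_def]
  fun_prop

lemma cdf_gaussianReal_eq_integral (μ : ℝ) {v : NNReal} (hv : v ≠ 0) (t : ℝ) :
    cdf (gaussianReal μ v) t = ∫ x in Iic t, gaussianPDFReal μ v x := by
  rw [cdf_eq_real, measureReal_def, gaussianReal_apply_eq_integral μ hv, ENNReal.toReal_ofReal]
  exact setIntegral_nonneg measurableSet_Iic fun x _ => gaussianPDFReal_nonneg μ v x

lemma hasDerivAt_cdf_gaussianReal (μ : ℝ) {v : NNReal} (hv : v ≠ 0) (t : ℝ) :
    HasDerivAt (cdf (gaussianReal μ v)) (gaussianPDFReal μ v t) t := by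
  have hint := integrable_gaussianPDFReal μ v
  have hcont := continuous_gaussianPDFReal μ v
  have hsplit : (cdf (gaussianReal μ v) : ℝ → ℝ) =
      fun s => cdf (gaussianReal μ v) 0 + ∫ x in (0 : ℝ)..s, gaussianPDFReal μ v x := by
    funext s
    rw [cdf_gaussianReal_eq_integral μ hv, cdf_gaussianReal_eq_integral μ hv,
      ← intervalIntegral.integral_Iic_sub_Iic hint.integrableOn hint.integrableOn]
    ring
  rw [hsplit]
  exact (intervalIntegral.integral_hasDerivAt_right hint.intervalIntegrable
    hcont.stronglyMeasurable.stronglyMeasurableAtFilter hcont.continuousAt).const_add _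

lemma gaussianPDFReal_zero_one (x : ℝ) :
    gaussianPDFReal 0 1 x = (√(2 * π))⁻¹ * exp (-x ^ 2 / 2) := by
  simp [gaussianPDFReal]

lemma gaussianPDFReal_zero_one_neg (x : ℝ) :
    gaussianPDFReal 0 1 (-x) = gaussianPDFReal 0 1 x := by
  simp only [gaussianPDFReal_zero_one, neg_sq]

lemma hasDerivAt_gaussianPDFReal_zero_one (x : ℝ) :
    HasDerivAt (gaussianPDFReal 0 1) (-(x * gaussianPDFReal 0 1 x)) x := by
  have hexp : HasDerivAt (fun y : ℝ => -y ^ 2 / 2) (-x) x :=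
    (((hasDerivAt_id x).pow 2).neg.div_const 2).congr_deriv (by simp; ring)
  rw [funext gaussianPDFReal_zero_one]
  exact (hexp.exp.const_mul _).congr_deriv (by ring)

lemma hasDerivAt_cdf_gaussianReal_neg (t : ℝ) :
    HasDerivAt (fun s => cdf (gaussianReal 0 1) (-s)) (-gaussianPDFReal 0 1 t) t := by
  simpa [gaussianPDFReal_zero_one_neg, Function.comp_def] using
    (hasDerivAt_cdf_gaussianReal 0 one_ne_zero (-t)).comp t (hasDerivAt_neg t)

lemma antitoneOn_gaussianPDFReal_zero_one : AntitoneOn (gaussianPDFReal 0 1) (Ici 0) := by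
  intro a ha b _ hab
  simp only [gaussianPDFReal_zero_one]
  gcongr

lemma tendsto_gaussianPDFReal_zero_one_atTop : Tendsto (gaussianPDFReal 0 1) atTop (𝓝 0) := by
  have hexp : Tendsto (fun x : ℝ => exp (-(x ^ 2 / 2))) atTop (𝓝 0) :=
    tendsto_exp_atBot.comp <| tendsto_neg_atTop_atBot.comp <|
      (tendsto_pow_atTop two_ne_zero).atTop_div_const two_pos
  simpa [funext gaussianPDFReal_zero_one, neg_div] using hexp.const_mul (√(2 * π))⁻¹

lemma cdf_gaussianReal_neg_le_div {y : ℝ} (hy : 0 < y) :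
    cdf (gaussianReal 0 1) (-y) ≤ gaussianPDFReal 0 1 y / y := by
  -- `φ(s)/s - Φ(-s)` decreases to `0` on `(0, ∞)`
  set h : ℝ → ℝ := fun s => gaussianPDFReal 0 1 s / s - cdf (gaussianReal 0 1) (-s) with hh
  have hderiv : ∀ s ∈ Ioi (0 : ℝ), HasDerivAt h (-(gaussianPDFReal 0 1 s / s ^ 2)) s := by
    intro s (hs : 0 < s)
    exact (((hasDerivAt_gaussianPDFReal_zero_one s).div (hasDerivAt_id s) hs.ne').sub
      (hasDerivAt_cdf_gaussianReal_neg s)).congr_deriv (by simp only [id]; field_simp; ring)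
  have hanti : AntitoneOn h (Ioi 0) := by
    refine antitoneOn_of_hasDerivWithinAt_nonpos (f' := fun s => -(gaussianPDFReal 0 1 s / s ^ 2))
      (convex_Ioi 0)
      (fun s hs => (hderiv s hs).continuousAt.continuousWithinAt) (fun s hs => ?_) (fun s hs => ?_)
    · rw [interior_Ioi] at hs ⊢
      exact (hderiv s hs).hasDerivWithinAt
    · exact neg_nonpos.2 (div_nonneg (gaussianPDFReal_nonneg 0 1 s) (sq_nonneg s))
  have htendsto : Tendsto h atTop (𝓝 0) := by
    have hpdf_div : Tendsto (fun s => gaussianPDFReal 0 1 s / s) atTop (𝓝 0) := by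
      simpa [div_eq_mul_inv] using tendsto_gaussianPDFReal_zero_one_atTop.mul tendsto_inv_atTop_zero
    simpa using hpdf_div.sub ((tendsto_cdf_atBot _).comp tendsto_neg_atTop_atBot)
  have hnonneg : 0 ≤ h y :=
    le_of_tendsto htendsto (eventually_atTop.2 ⟨y, fun s hs => hanti hy (hy.trans_le hs) hs⟩)
  simpa [hh] using hnonneg

lemma isMinOn_Ioi_mul_sq_add_mul_cdf_neg {a T s : ℝ} (hT : 0 ≤ T) (hs : 0 < s)
    (hcrit : 2 * a * s = T * gaussianPDFReal 0 1 s) :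
    IsMinOn (fun y => a * y ^ 2 + T * cdf (gaussianReal 0 1) (-y)) (Ioi 0) s := by
  set f := fun y => a * y ^ 2 + T * cdf (gaussianReal 0 1) (-y)
  have hderiv (y : ℝ) : HasDerivAt f (2 * a * y - T * gaussianPDFReal 0 1 y) y :=
    ((((hasDerivAt_id y).pow 2).const_mul a).add
      ((hasDerivAt_cdf_gaussianReal_neg y).const_mul T)).congr_deriv (by simp; ring)
  have hdiff : Differentiable ℝ f := fun y => (hderiv y).differentiableAt
  have hderiv_eq : deriv f = fun y => 2 * a * y - T * gaussianPDFReal 0 1 y :=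
    funext fun y => (hderiv y).deriv
  have ha : 0 ≤ a := by
    have := gaussianPDFReal_nonneg 0 1 s
    nlinarith
  refine isMinOn_Ioi_of_deriv (hdiff s).continuousAt hdiff.differentiableOn hdiff.differentiableOn
    (fun y hy => ?_) (fun y hy => ?_) <;> rw [hderiv_eq]
  · have := antitoneOn_gaussianPDFReal_zero_one (le_of_lt hy.1) hs.le hy.2.le
    nlinarith [hy.2]
  · have := antitoneOn_gaussianPDFReal_zero_one hs.le (hs.trans hy).le (le_of_lt hy)
    nlinarith [mem_Ioi.1 hy]

lemma mul_gaussianPDFReal_sqrt_eq {Δ T w : ℝ} (hΔ : Δ ≠ 0) (hT : 0 ≤ T) (hw : 0 ≤ w)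
    (hwe : w * exp w = T ^ 2 * Δ ^ 4 / (32 * π)) :
    T * gaussianPDFReal 0 1 (√w) = 4 * √w / Δ ^ 2 := by
  refine (pow_left_inj₀ (mul_nonneg hT (gaussianPDFReal_nonneg 0 1 _)) (by positivity)
    two_ne_zero).1 ?_
  have hexp : exp (-w / 2) ^ 2 = (exp w)⁻¹ := by rw [← exp_nat_mul, ← exp_neg]; ring_nf
  rw [gaussianPDFReal_zero_one, mul_pow, mul_pow, inv_pow, sq_sqrt hw, sq_sqrt (by positivity),
    hexp, div_pow, mul_pow, sq_sqrt hw]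
  rw [eq_div_iff (by positivity)] at hwe
  field_simp
  linear_combination -hwe

end ProbabilityTheory

theorem fixed_budget_optimal_n_general (Δ T : ℝ) (hΔ : 0 < Δ) (hT : 1 ≤ T)
    (w : ℝ) (hw : 0 < w) (hwe : w * Real.exp w = T ^ 2 * Δ ^ 4 / (32 * π)) :
    (2 / Δ ^ 2) * w ∈ Set.Ioi (0 : ℝ) ∧
      IsMinOn (fun x : ℝ => x + T * cdf (gaussianReal 0 1) (-Δ * Real.sqrt (x / 2)))
        (Set.Ioi (0 : ℝ)) ((2 / Δ ^ 2) * w) ∧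
      cdf (gaussianReal 0 1) (-Δ * Real.sqrt ((2 / Δ ^ 2) * w / 2)) ≤ 4 / (T * Δ ^ 2) := by
  have hT₀ : 0 < T := one_pos.trans_le hT
  have hs : 0 < √w := sqrt_pos.2 hw
  have hcrit := mul_gaussianPDFReal_sqrt_eq hΔ.ne' hT₀.le hw.le hwe
  have hsubst (x : ℝ) (hx : 0 ≤ x) : 2 / Δ ^ 2 * (Δ * √(x / 2)) ^ 2 = x := by
    rw [mul_pow, sq_sqrt (by positivity)]
    field_simp
  have hstar : Δ * √(2 / Δ ^ 2 * w / 2) = √w := by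
    rw [show 2 / Δ ^ 2 * w / 2 = w / Δ ^ 2 by ring, sqrt_div' _ (by positivity), sqrt_sq hΔ.le]
    field_simp
  refine ⟨mem_Ioi.2 (by positivity), fun x (hx : 0 < x) => ?_, ?_⟩
  · have hmin := isMinOn_Ioi_mul_sq_add_mul_cdf_neg (a := 2 / Δ ^ 2) hT₀.le hs
      (by rw [hcrit]; ring) (show 0 < Δ * √(x / 2) by positivity)
    simp only [mem_ofPred_eq, neg_mul, hsubst x hx.le, sq_sqrt hw.le] at hmin ⊢
    rwa [hstar]
  · rw [neg_mul, hstar]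
    calc cdf (gaussianReal 0 1) (-√w) ≤ gaussianPDFReal 0 1 (√w) / √w :=
          cdf_gaussianReal_neg_le_div hs
      _ = 4 / (T * Δ ^ 2) := by
          field_simp at hcrit ⊢
          linear_combination hcrit

/-- Let `Δ > 0`, `T ≥ 1` with `TΔ² > 4√(2πe)`, `Φ` the standard Gaussian CDF, and
`g(x) = x + T·Φ(-Δ√(x/2))`. Then `g` attains its minimum over `(0,∞)` at
`x* = (2/Δ²)·W(T²Δ⁴/(32π))` (with `W` the Lambert function, given here by `w > 0`
with `w·exp(w) = T²Δ⁴/(32π)`), and `Φ(-Δ√(x*/2)) ≤ 4/(TΔ²)`. -/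
theorem fixed_budget_optimal_n (Δ T : ℝ) (hΔ : 0 < Δ) (hT : 1 ≤ T)
    (hTΔ : 4 * Real.sqrt (2 * π * Real.exp 1) < T * Δ ^ 2)
    (w : ℝ) (hw : 0 < w) (hwe : w * Real.exp w = T ^ 2 * Δ ^ 4 / (32 * π)) :
    (2 / Δ ^ 2) * w ∈ Set.Ioi (0 : ℝ) ∧
      IsMinOn (fun x : ℝ => x + T * cdf (gaussianReal 0 1) (-Δ * Real.sqrt (x / 2)))
        (Set.Ioi (0 : ℝ)) ((2 / Δ ^ 2) * w) ∧
      cdf (gaussianReal 0 1) (-Δ * Real.sqrt ((2 / Δ ^ 2) * w / 2)) ≤ 4 / (T * Δ ^ 2) :=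
  fixed_budget_optimal_n_general Δ T hΔ hT w hw hwe
end

section
/- Let S_n be the sum of n i.i.d. N(Δ, 2) variables with Δ > 0. For any ε > 0 and any integer n ≤ 4(1-ε)·log(T)/Δ², the probability P(S_n ≤ 0) ≥ (1 - 2/(nΔ²)) · T^{ε-1} / (2√(π·log T)). -/
/-!
The sum `S_n` is `N(nΔ, 2n)`, so `P(S_n ≤ 0) = P(N(0,1) ≥ y)` with `y = Δ √(n/2)`. The
Mills-ratio lower bound `∫_y^∞ e^{-x²/2} dx ≥ (1/y - 1/y³) e^{-y²/2}` follows by integrating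
`d/dx [(x⁻³ - x⁻¹) e^{-x²/2}] = (1 - 3/x⁴) e^{-x²/2} ≤ e^{-x²/2}` over `[y, ∞)`; it remains to
use `y² = nΔ²/2 ≤ 2(1-ε) log T`.
-/

open MeasureTheory ProbabilityTheory Real Set Filter Topology NNReal

lemma map_sum_range_eq_gaussianReal {Ω : Type*} [MeasurableSpace Ω] {P : Measure Ω}
    [IsProbabilityMeasure P] {Z : ℕ → Ω → ℝ} (hmeas : ∀ i, Measurable (Z i))
    (hindep : iIndepFun Z P) {m : ℝ} {v : ℝ≥0}
    (hdist : ∀ i, P.map (Z i) = gaussianReal m v) (n : ℕ) :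
    P.map (∑ i ∈ Finset.range n, Z i) = gaussianReal (n * m) (n * v) := by
  induction n with
  | zero => exact (Measure.map_const P (0 : ℝ)).trans (by simp)
  | succ n ih =>
    rw [Finset.sum_range_succ, gaussianReal_add_gaussianReal_of_indepFun
      (hindep.indepFun_finsetSum_of_notMem hmeas Finset.notMem_range_self) ih (hdist n)]
    push_cast
    ring_nf

lemma tendsto_exp_neg_sq_div_two_atTop :
    Tendsto (fun x : ℝ => rexp (-x ^ 2 / 2)) atTop (𝓝 0) := by
  have := tendsto_exp_neg_atTop_nhds_zero.comp
    ((tendsto_pow_atTop two_ne_zero).atTop_div_const (two_pos : (0:ℝ) < 2))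
  simpa only [Function.comp_def, neg_div] using this

lemma mul_exp_neg_sq_div_two_le_integral_Ioi {y : ℝ} (hy : 0 < y) :
    (1 / y - 1 / y ^ 3) * rexp (-y ^ 2 / 2) ≤ ∫ x in Ioi y, rexp (-x ^ 2 / 2) := by
  set φ : ℝ → ℝ := fun x => rexp (-x ^ 2 / 2)
  set H : ℝ → ℝ := fun x => (x⁻¹ ^ 3 - x⁻¹) * φ x
  have hφ_int : Integrable φ := by
    simpa [φ, neg_div, div_eq_inv_mul] using integrable_exp_neg_mul_sq (b := 1 / 2) (by norm_num)
  have hderiv : ∀ x ∈ Ici y, HasDerivAt H ((1 - 3 / x ^ 4) * φ x) x := by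
    intro x hx
    have hx0 : x ≠ 0 := (hy.trans_le hx).ne'
    have hφ' : HasDerivAt φ (-x * φ x) x := by
      have := (((hasDerivAt_pow 2 x).fun_neg).div_const 2).exp
      convert this using 1
      simp only [neg_mul, Nat.cast_ofNat, Nat.add_one_sub_one, pow_one, φ]
      ring
    have hinv := hasDerivAt_inv hx0
    refine (((hinv.fun_pow 3).fun_sub hinv).fun_mul hφ').congr_deriv ?_
    simp only [inv_pow]
    field_simp
    ring
  have hint : IntegrableOn (fun x => (1 - 3 / x ^ 4) * φ x) (Ioi y) := by
    refine (hφ_int.integrableOn.const_mul (1 + 3 / y ^ 4)).mono' (by fun_prop) ?_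
    filter_upwards [ae_restrict_mem measurableSet_Ioi] with x (hx : y < x)
    have hxy : 3 / x ^ 4 ≤ 3 / y ^ 4 := by gcongr
    rw [norm_mul, Real.norm_of_nonneg (exp_nonneg _)]
    gcongr
    rw [Real.norm_eq_abs, abs_le]
    constructor <;> nlinarith [show 0 ≤ 3 / x ^ 4 by positivity]
  have hlim : Tendsto H atTop (𝓝 0) := by
    have h1 : Tendsto (fun x : ℝ => x⁻¹ ^ 3 - x⁻¹) atTop (𝓝 0) := by
      have h0 : Tendsto (fun x : ℝ => x⁻¹) atTop (𝓝 0) := tendsto_inv_atTop_zero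
      simpa using (h0.pow 3).sub h0
    simpa only [zero_mul] using h1.mul tendsto_exp_neg_sq_div_two_atTop
  calc (1 / y - 1 / y ^ 3) * rexp (-y ^ 2 / 2) = ∫ x in Ioi y, (1 - 3 / x ^ 4) * φ x := by
        rw [integral_Ioi_of_hasDerivAt_of_tendsto' hderiv hint hlim]
        simp only [one_div, inv_pow, zero_sub, H, φ]
        ring
    _ ≤ ∫ x in Ioi y, φ x := by
        refine setIntegral_mono_on hint hφ_int.integrableOn measurableSet_Ioi fun x _ => ?_
        have : 0 ≤ 3 / x ^ 4 := by positivity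
        nlinarith [exp_pos (-x ^ 2 / 2)]

lemma map_sub_div_sqrt_gaussianReal (μ : ℝ) {v : ℝ≥0} (hv : v ≠ 0) :
    (gaussianReal μ v).map (fun x => (μ - x) / √v) = gaussianReal 0 1 := by
  have hv' : (0 : ℝ) < v := by positivity
  rw [show (fun x => (μ - x) / √v) = (· / √(v : ℝ)) ∘ (μ - ·) from rfl,
    ← Measure.map_map (by fun_prop) (by fun_prop), gaussianReal_map_const_sub,
    gaussianReal_map_div_const, sub_self, zero_div]
  congr 1
  ext
  simp [Real.sq_sqrt hv'.le, hv'.ne']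

lemma gaussianReal_Iic_zero {μ : ℝ} {v : ℝ≥0} (hv : v ≠ 0) :
    gaussianReal μ v (Iic 0) = gaussianReal 0 1 (Ici (μ / √v)) := by
  have hv' : (0 : ℝ) < √v := by positivity
  rw [← map_sub_div_sqrt_gaussianReal μ hv, Measure.map_apply (by fun_prop) measurableSet_Ici]
  congr 1
  ext x
  simp [div_le_div_iff_of_pos_right hv']

lemma ofReal_le_gaussianReal_Ici {y : ℝ} (hy : 0 < y) :
    ENNReal.ofReal ((1 - 1 / y ^ 2) / (y * √(2 * π)) * rexp (-y ^ 2 / 2)) ≤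
      gaussianReal 0 1 (Ici y) := by
  rw [gaussianReal_apply_eq_integral _ one_ne_zero, integral_Ici_eq_integral_Ioi]
  refine ENNReal.ofReal_le_ofReal ?_
  simp only [gaussianPDFReal, NNReal.coe_one, mul_one, sub_zero]
  rw [integral_const_mul]
  calc (1 - 1 / y ^ 2) / (y * √(2 * π)) * rexp (-y ^ 2 / 2)
      = (√(2 * π))⁻¹ * ((1 / y - 1 / y ^ 3) * rexp (-y ^ 2 / 2)) := by field_simp
    _ ≤ _ := by gcongr; exact mul_exp_neg_sq_div_two_le_integral_Ioi hy

lemma ofReal_budget_le_ofReal_gaussian_tail {y T ε : ℝ} (hy : 0 < y) (hT : 1 ≤ T) (hε : 0 < ε)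
    (hyT : y ^ 2 ≤ 2 * (1 - ε) * Real.log T) :
    ENNReal.ofReal ((1 - 1 / y ^ 2) * T ^ (ε - 1) / (2 * √(π * Real.log T))) ≤
      ENNReal.ofReal ((1 - 1 / y ^ 2) / (y * √(2 * π)) * rexp (-y ^ 2 / 2)) := by
  have hL : 0 ≤ Real.log T := Real.log_nonneg hT
  rw [ENNReal.ofReal_le_ofReal_iff']
  rcases le_or_gt (1 - 1 / y ^ 2) 0 with hc | hc
  · exact .inr (div_nonpos_of_nonpos_of_nonneg
      (mul_nonpos_of_nonpos_of_nonneg hc (by positivity)) (by positivity))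
  refine .inl ?_
  have hexp : T ^ (ε - 1) ≤ rexp (-y ^ 2 / 2) := by
    rw [Real.rpow_def_of_pos (by linarith), Real.exp_le_exp]
    nlinarith
  have hscale : y * √(2 * π) ≤ 2 * √(π * Real.log T) := by
    have hyL : y ^ 2 ≤ 2 * Real.log T := by nlinarith [mul_nonneg hε.le hL]
    rw [← abs_of_pos hy, ← Real.sqrt_sq_eq_abs, ← Real.sqrt_mul (sq_nonneg y), Real.sqrt_le_iff,
      mul_pow, Real.sq_sqrt (by positivity)]
    exact ⟨by positivity, by nlinarith [mul_le_mul_of_nonneg_right hyL Real.pi_pos.le]⟩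
  rw [div_mul_eq_mul_div]
  gcongr

/-- Let `S_n` be the sum of `n` i.i.d. `N(Δ,2)` variables with `Δ > 0`. For any `ε > 0`,
`T ≥ 1`, and integer `1 ≤ n ≤ 4(1-ε)·log(T)/Δ²`, we have
`P(S_n ≤ 0) ≥ (1 - 2/(nΔ²)) · T^{ε-1} / (2√(π·log T))`. -/
theorem small_budget_failure_probability {Ω : Type*} [MeasurableSpace Ω] (P : Measure Ω)
    [IsProbabilityMeasure P] (Δ : ℝ) (hΔ : 0 < Δ) (Z : ℕ → Ω → ℝ)
    (hmeas : ∀ i, Measurable (Z i))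
    (hindep : iIndepFun Z P)
    (hdist : ∀ i, Measure.map (Z i) P = gaussianReal Δ 2)
    (T : ℝ) (hT : 1 ≤ T) (ε : ℝ) (hε : 0 < ε)
    (n : ℕ) (hn : 1 ≤ n) (hnle : (n : ℝ) ≤ 4 * (1 - ε) * Real.log T / Δ ^ 2) :
    ENNReal.ofReal ((1 - 2 / (n * Δ ^ 2)) * T ^ (ε - 1) /
        (2 * Real.sqrt (π * Real.log T))) ≤
      P {ω | (∑ i ∈ Finset.range n, Z i ω) ≤ 0} := by
  have hn0 : (0 : ℝ) < n := by exact_mod_cast hn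
  have hv : (n : ℝ≥0) * 2 ≠ 0 := by positivity
  have hevent : P {ω | (∑ i ∈ Finset.range n, Z i ω) ≤ 0} =
      gaussianReal (n * Δ) (n * 2) (Iic 0) := by
    rw [← map_sum_range_eq_gaussianReal hmeas hindep hdist n,
      Measure.map_apply (by fun_prop) measurableSet_Iic]
    simp only [preimage, mem_Iic, Finset.sum_apply]
  set y := n * Δ / √((n * 2 : ℝ≥0) : ℝ)
  have hy : 0 < y := by positivity
  have hy2 : y ^ 2 = n * Δ ^ 2 / 2 := by
    rw [div_pow, Real.sq_sqrt (by positivity)]; push_cast; field_simp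
  rw [hevent, gaussianReal_Iic_zero hv]
  calc _ = ENNReal.ofReal ((1 - 1 / y ^ 2) * T ^ (ε - 1) / (2 * √(π * Real.log T))) := by
        rw [hy2, one_div_div]
    _ ≤ _ := ofReal_budget_le_ofReal_gaussian_tail hy hT hε (by
        rw [le_div_iff₀ (by positivity)] at hnle; linarith)
    _ ≤ _ := ofReal_le_gaussianReal_Ici hy
end

section
/- Let η ∈ (1,2) and define f on [0,∞) by f(u) = 2·min{1, √(η/(4π·log(T/η^{u+1})))}·(η^{u+1}/T)^{1/η}·exp(-η^{u-1}ε²/2), for T, ε with Tε² > e² and η = log(ε²T)/(log(ε²T)-1). Then sup_{u ≥ 0} f(u) ≤ 8e/(ε²T). -/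
open Real

/-- Let `ε > 0`, `T > 0` with `Tε² > e²`, `η = log(ε²T)/(log(ε²T)-1) ∈ (1,2)`, and define
`f(u) = 2·min{1, √(η/(4π·log(T/η^{u+1})))}·(η^{u+1}/T)^{1/η}·exp(-η^{u-1}ε²/2)`
(with the convention that the square-root factor is `+∞`, so the min equals `1`, when
`log(T/η^{u+1}) ≤ 0`). Then `sup_{u ≥ 0} f(u) ≤ 8e/(ε²T)`. -/
theorem peeling_function_max_bound (T ε : ℝ) (hT : 0 < T) (hε : 0 < ε)
    (h : Real.exp 1 ^ 2 < T * ε ^ 2)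
    (η : ℝ) (hη : η = Real.log (ε ^ 2 * T) / (Real.log (ε ^ 2 * T) - 1))
    (hη1 : 1 < η) (hη2 : η < 2) :
    ∀ u : ℝ, 0 ≤ u →
      2 * (if 0 < Real.log (T / η ^ (u + 1)) then
            min 1 (Real.sqrt (η / (4 * π * Real.log (T / η ^ (u + 1)))))
          else 1) *
          (η ^ (u + 1) / T) ^ (1 / η) * Real.exp (-η ^ (u - 1) * ε ^ 2 / 2) ≤
        8 * Real.exp 1 / (ε ^ 2 * T) := by
  intro u hu
  have hηpos : (0:ℝ) < η := by linarith
  have hS0 : (0:ℝ) < ε ^ 2 * T := by positivity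
  set S := ε ^ 2 * T with hSdef
  have hSe : Real.exp 1 ^ 2 < S := by rw [hSdef]; nlinarith [h]
  set L := Real.log S with hLdef
  have hL : 2 < L := by
    have h1 : Real.log (Real.exp 1 ^ 2) < L := Real.log_lt_log (by positivity) hSe
    rwa [Real.log_pow, Real.log_exp, mul_one] at h1
  have hLpos : (0:ℝ) < L := by linarith
  have hc : 1 / η = (L - 1) / L := by rw [hη, one_div_div]
  set c := 1 / η with hcdef
  have hc0 : (0:ℝ) < c := by positivity
  have hc1 : c ≤ 1 := by rw [hcdef, div_le_one hηpos]; linarith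
  set t := η ^ (u - 1) * ε ^ 2 with ht
  have ht0 : (0:ℝ) < t := by positivity
  set z := η * t / 2 with hz
  have hz0 : (0:ℝ) < z := by positivity
  have hcz : c * z = t / 2 := by
    rw [hcdef, hz]; field_simp
  have h2 : η ^ (2:ℝ) = η * η := by
    rw [show (2:ℝ) = ((2:ℕ):ℝ) by norm_num, Real.rpow_natCast]; ring
  have hpow : η ^ (u + 1) = η ^ (u - 1) * η ^ (2:ℝ) := by
    rw [← Real.rpow_add hηpos]; ring_nf
  have hX : η ^ (u + 1) / T = (2 * η / S) * z := by
    rw [hpow, h2, hz, ht, hSdef]; field_simp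
  -- bound on z^c
  have hzc : z ^ c ≤ Real.exp (t / 2 - c) := by
    rw [Real.rpow_def_of_pos hz0]
    apply Real.exp_le_exp.mpr
    have hlog := Real.log_le_sub_one_of_pos hz0
    have : Real.log z * c ≤ (z - 1) * c := by
      apply mul_le_mul_of_nonneg_right hlog (le_of_lt hc0)
    calc Real.log z * c ≤ (z - 1) * c := this
      _ = c * z - c := by ring
      _ = t / 2 - c := by rw [hcz]
  -- bound on (2η/S)^c
  have hq0 : (0:ℝ) < 2 * η / S := by positivity
  have hqc : (2 * η / S) ^ c ≤ 4 * Real.exp 1 / S := by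
    have hRHS : 4 * Real.exp 1 / S = Real.exp (Real.log 4 + 1 - L) := by
      rw [Real.exp_sub, Real.exp_add, Real.exp_log (by norm_num : (0:ℝ) < 4),
        hLdef, Real.exp_log hS0]
    rw [Real.rpow_def_of_pos hq0, hRHS]
    apply Real.exp_le_exp.mpr
    have hlog : Real.log (2 * η / S) = Real.log (2 * η) - L :=
      Real.log_div (by positivity) (ne_of_gt hS0)
    set M := Real.log (2 * η) with hM
    have hM0 : (0:ℝ) ≤ M := Real.log_nonneg (by linarith)
    have hM4 : M ≤ Real.log 4 := Real.log_le_log (by positivity) (by linarith)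
    have hlog4 : (0:ℝ) ≤ Real.log 4 := le_trans hM0 hM4
    rw [hlog, hc, mul_comm, div_mul_eq_mul_div, div_le_iff₀ hLpos]
    nlinarith [mul_le_mul_of_nonneg_left hM4 (show (0:ℝ) ≤ L - 1 by linarith)]
  -- min factor ≤ 1 and nonneg
  have hF1 : (if 0 < Real.log (T / η ^ (u + 1)) then
      min 1 (Real.sqrt (η / (4 * π * Real.log (T / η ^ (u + 1))))) else 1) ≤ 1 := by
    split_ifs
    · exact min_le_left _ _
    · exact le_refl 1
  have hF0 : (0:ℝ) ≤ (if 0 < Real.log (T / η ^ (u + 1)) then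
      min 1 (Real.sqrt (η / (4 * π * Real.log (T / η ^ (u + 1))))) else 1) := by
    split_ifs
    · exact le_min zero_le_one (Real.sqrt_nonneg _)
    · exact zero_le_one
  have hexp : -η ^ (u - 1) * ε ^ 2 / 2 = -(t / 2) := by rw [ht]; ring
  rw [hexp]
  have hXc : (0:ℝ) ≤ (η ^ (u + 1) / T) ^ c := by positivity
  calc 2 * (if 0 < Real.log (T / η ^ (u + 1)) then
        min 1 (Real.sqrt (η / (4 * π * Real.log (T / η ^ (u + 1))))) else 1) *
        (η ^ (u + 1) / T) ^ c * Real.exp (-(t / 2))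
      ≤ 2 * 1 * (η ^ (u + 1) / T) ^ c * Real.exp (-(t / 2)) := by
        gcongr
    _ = 2 * ((2 * η / S) ^ c * z ^ c) * Real.exp (-(t / 2)) := by
        rw [hX, Real.mul_rpow (le_of_lt hq0) (le_of_lt hz0)]; ring
    _ ≤ 2 * ((2 * η / S) ^ c * Real.exp (t / 2 - c)) * Real.exp (-(t / 2)) := by
        gcongr
    _ = 2 * (2 * η / S) ^ c * Real.exp (-c) := by
        rw [show (-c : ℝ) = (t / 2 - c) + -(t / 2) by ring, Real.exp_add]; ring
    _ ≤ 2 * (4 * Real.exp 1 / S) * 1 := by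
        have he1 : Real.exp (-c) ≤ 1 := Real.exp_le_one_iff.mpr (by linarith)
        have := Real.rpow_nonneg (le_of_lt hq0) c
        gcongr
    _ = 8 * Real.exp 1 / S := by ring
end

section
/- For the K-armed problem with means μ₁ > μ₂ = ... = μ_K and Δ = μ₁ - μ₂, the maximizer over the probability simplex of w ↦ inf_{a≠1}[w₁·(m_a - μ₁)²/2 + w_a·(m_a - μ_a)²/2], where m_a = (w₁μ₁ + w_aμ_a)/(w₁+w_a), is given by w₁* = √(K-1)/(K-1+√(K-1)) and w_a* = 1/(K-1+√(K-1)) for a ≥ 2, and the corresponding optimal value gives T* = 2(√(K-1)+1)²/Δ². -/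
open Real

lemma bai_term_eq (x y M m : ℝ) (hx : 0 ≤ x) (hy : 0 ≤ y) :
    x * ((x * M + y * m) / (x + y) - M) ^ 2 / 2 +
      y * ((x * M + y * m) / (x + y) - m) ^ 2 / 2
    = x * y / (x + y) * ((M - m) ^ 2 / 2) := by
  rcases eq_or_lt_of_le (by positivity : (0:ℝ) ≤ x + y) with h | h
  · have hx0 : x = 0 := by linarith
    have hy0 : y = 0 := by linarith
    simp [hx0, hy0]
  · have hne : x + y ≠ 0 := ne_of_gt h
    field_simp
    ring

lemma bai_key_ineq (s x y : ℝ) (hs : 0 ≤ s) (hx : 0 ≤ x) (hy : 0 ≤ y)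
    (h : x + s ^ 2 * y ≤ 1) : x * y / (x + y) ≤ 1 / (s + 1) ^ 2 := by
  rcases eq_or_lt_of_le (by positivity : (0:ℝ) ≤ x + y) with h0 | h0
  · rw [← h0]
    simp
    positivity
  · rw [div_le_div_iff₀ h0 (by positivity)]
    nlinarith [sq_nonneg (1 - s * (s + 1) * y), mul_nonneg hx hy, sq_nonneg (x - s * y)]

/-- For the `K`-armed Gaussian best-arm-identification problem with means
`μ₁ > μ₂ = ⋯ = μ_K` and `Δ = μ₁ - μ₂`, the function
`F(w) = inf_{a ≠ 1} [w₁·(m_a-μ₁)²/2 + w_a·(m_a-μ_a)²/2]`, with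
`m_a = (w₁μ₁ + w_aμ_a)/(w₁+w_a)`, is maximized over the probability simplex at
`w₁* = √(K-1)/(K-1+√(K-1))`, `w_a* = 1/(K-1+√(K-1))` for `a ≥ 2`, and the optimal value
is `1/T*` with `T* = 2(√(K-1)+1)²/Δ²`. -/
theorem bai_characteristic_time (K : ℕ) (hK : 2 ≤ K) (Δ μ₂ : ℝ) (hΔ : 0 < Δ)
    (μ : Fin K → ℝ) (hμ0 : μ ⟨0, by omega⟩ = μ₂ + Δ)
    (hμa : ∀ a : Fin K, a ≠ ⟨0, by omega⟩ → μ a = μ₂)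
    (F : (Fin K → ℝ) → ℝ)
    (hF : ∀ w, F w = ⨅ a : {a : Fin K // a ≠ ⟨0, by omega⟩},
      w ⟨0, by omega⟩ *
          ((w ⟨0, by omega⟩ * μ ⟨0, by omega⟩ + w a.1 * μ a.1) /
              (w ⟨0, by omega⟩ + w a.1) - μ ⟨0, by omega⟩) ^ 2 / 2 +
        w a.1 *
          ((w ⟨0, by omega⟩ * μ ⟨0, by omega⟩ + w a.1 * μ a.1) /
              (w ⟨0, by omega⟩ + w a.1) - μ a.1) ^ 2 / 2)
    (wstar : Fin K → ℝ)
    (hwstar : wstar = fun a => if a = ⟨0, by omega⟩ then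
        Real.sqrt (K - 1) / ((K - 1) + Real.sqrt (K - 1))
      else 1 / ((K - 1) + Real.sqrt (K - 1))) :
    wstar ∈ stdSimplex ℝ (Fin K) ∧
      IsMaxOn F (stdSimplex ℝ (Fin K)) wstar ∧
      F wstar = 1 / (2 * (Real.sqrt (K - 1) + 1) ^ 2 / Δ ^ 2) := by
  have hK0 : 0 < K := by omega
  set i0 : Fin K := ⟨0, by omega⟩ with hi0
  set s : ℝ := Real.sqrt ((K : ℝ) - 1) with hsdef
  have hn1 : (1 : ℝ) ≤ (K : ℝ) - 1 := by
    have : (2 : ℝ) ≤ (K : ℝ) := by exact_mod_cast hK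
    linarith
  have hs1 : 1 ≤ s := by
    rw [hsdef]
    exact Real.one_le_sqrt.mpr hn1
  have hs0 : 0 < s := by linarith
  have hs2 : s ^ 2 = (K : ℝ) - 1 := Real.sq_sqrt (by linarith)
  have hd : (0 : ℝ) < ((K : ℝ) - 1) + s := by linarith
  have hdne : ((K : ℝ) - 1) + s ≠ 0 := ne_of_gt hd
  -- nonempty index type
  have hne : Nonempty {a : Fin K // a ≠ i0} := by
    refine ⟨⟨⟨1, by omega⟩, ?_⟩⟩
    simp [hi0, Fin.ext_iff]
  -- values of wstar
  have hw0 : wstar i0 = s / (((K : ℝ) - 1) + s) := by rw [hwstar]; simp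
  have hwa : ∀ a : Fin K, a ≠ i0 → wstar a = 1 / (((K : ℝ) - 1) + s) := by
    intro a ha
    rw [hwstar]
    simp [ha]
  -- cardinality fact
  have hcard : ((Finset.univ.erase i0).card : ℝ) = (K : ℝ) - 1 := by
    rw [Finset.card_erase_of_mem (Finset.mem_univ _)]
    simp [Finset.card_univ]
    rw [Nat.cast_sub (by omega)]
    simp
  -- membership in the simplex
  have hmem : wstar ∈ stdSimplex ℝ (Fin K) := by
    constructor
    · intro a
      rw [hwstar]
      by_cases ha : a = i0 <;> simp [ha] <;> positivity
    · rw [← Finset.add_sum_erase _ _ (Finset.mem_univ i0), hw0,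
        Finset.sum_congr rfl (fun a ha => hwa a (Finset.ne_of_mem_erase ha)),
        Finset.sum_const, nsmul_eq_mul, hcard]
      field_simp
      ring
  -- value at wstar
  have hval : F wstar = Δ ^ 2 / (2 * (s + 1) ^ 2) := by
    rw [hF]
    have hconst : ∀ a : {a : Fin K // a ≠ i0},
        wstar i0 * ((wstar i0 * μ i0 + wstar a.1 * μ a.1) /
            (wstar i0 + wstar a.1) - μ i0) ^ 2 / 2 +
          wstar a.1 * ((wstar i0 * μ i0 + wstar a.1 * μ a.1) /
              (wstar i0 + wstar a.1) - μ a.1) ^ 2 / 2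
        = Δ ^ 2 / (2 * (s + 1) ^ 2) := by
      intro a
      rw [hμ0, hμa a.1 a.2, hw0, hwa a.1 a.2,
        bai_term_eq _ _ _ _ (by positivity) (by positivity)]
      have h1 : μ₂ + Δ - μ₂ = Δ := by ring
      rw [h1]
      have hkey : s / (((K : ℝ) - 1) + s) * (1 / (((K : ℝ) - 1) + s)) /
          (s / (((K : ℝ) - 1) + s) + 1 / (((K : ℝ) - 1) + s)) = 1 / (s + 1) ^ 2 := by
        rw [← hs2]
        have h2 : s ^ 2 + s ≠ 0 := by positivity
        rw [div_eq_div_iff]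
        · field_simp
        · have : s / (s ^ 2 + s) + 1 / (s ^ 2 + s) = (s + 1) / (s ^ 2 + s) := by ring
          rw [this]
          positivity
        · positivity
      rw [hkey]
      field_simp
    calc (⨅ a : {a : Fin K // a ≠ i0}, wstar i0 * ((wstar i0 * μ i0 + wstar a.1 * μ a.1) /
            (wstar i0 + wstar a.1) - μ i0) ^ 2 / 2 +
          wstar a.1 * ((wstar i0 * μ i0 + wstar a.1 * μ a.1) /
              (wstar i0 + wstar a.1) - μ a.1) ^ 2 / 2)
        = ⨅ _ : {a : Fin K // a ≠ i0}, Δ ^ 2 / (2 * (s + 1) ^ 2) := by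
          exact congrArg _ (funext hconst)
      _ = Δ ^ 2 / (2 * (s + 1) ^ 2) := ciInf_const
  refine ⟨hmem, ?_, ?_⟩
  · -- maximality
    intro w hw
    simp only [Set.mem_setOf_eq]
    rw [hval, hF]
    have hw0' : 0 ≤ w i0 := hw.1 i0
    -- pigeonhole: some a ≠ i0 has w a ≤ (1 - w i0)/(K-1)
    obtain ⟨a, ha, haw⟩ : ∃ a ∈ Finset.univ.erase i0, w a ≤ (1 - w i0) / ((K : ℝ) - 1) := by
      apply Finset.exists_le_of_sum_le
      · exact ⟨⟨1, by omega⟩, Finset.mem_erase.mpr ⟨by simp [hi0, Fin.ext_iff], Finset.mem_univ _⟩⟩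
      · rw [Finset.sum_const, nsmul_eq_mul, hcard]
        have hsum : ∑ a ∈ Finset.univ.erase i0, w a = 1 - w i0 := by
          have := hw.2
          rw [← Finset.add_sum_erase _ _ (Finset.mem_univ i0)] at this
          linarith
        rw [hsum]
        rw [mul_div_cancel₀]
        linarith
    have ha' : a ≠ i0 := Finset.ne_of_mem_erase ha
    have hwa' : 0 ≤ w a := hw.1 a
    refine le_trans (ciInf_le (Finite.bddBelow_range _) ⟨a, ha'⟩) ?_
    simp only
    rw [hμ0, hμa a ha', bai_term_eq _ _ _ _ hw0' hwa']
    have h1 : μ₂ + Δ - μ₂ = Δ := by ring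
    rw [h1]
    have hcon : w i0 + s ^ 2 * w a ≤ 1 := by
      rw [hs2]
      have : ((K : ℝ) - 1) * w a ≤ 1 - w i0 := by
        rw [le_div_iff₀ (by linarith)] at haw
        linarith [haw]
      linarith
    have := bai_key_ineq s (w i0) (w a) (le_of_lt hs0) hw0' hwa' hcon
    calc w i0 * w a / (w i0 + w a) * (Δ ^ 2 / 2)
        ≤ 1 / (s + 1) ^ 2 * (Δ ^ 2 / 2) := by
          apply mul_le_mul_of_nonneg_right this (by positivity)
      _ = Δ ^ 2 / (2 * (s + 1) ^ 2) := by field_simp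
  · rw [hval]
    rw [eq_div_iff (by positivity)]
    field_simp
end
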